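/- arXiv:2301.06183 — 6 statements merged into one kernel-verified Lean document; each statement's English description precedes it below -/
import Mathlib

section
/- Let H be a complex Hilbert space, T a bounded linear operator on H, and φ ∈ H. If the sequence {T^k φ}_{k=0}^∞ is a frame for H, then T has closed range. -/
open scoped ComplexInnerProductSpace
open scoped ENNReal

lemma lp_norm_sq_aux (x : lp (fun _ : ℕ => ℂ) 2) : ‖x‖ ^ 2 = ∑' k, ‖x k‖ ^ 2 := by
  have h := lp.norm_rpow_eq_tsum (p := (2 : ℝ≥0∞)) (by norm_num) x
  norm_num at h
  convert h using 2

section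
variable {H : Type*} [NormedAddCommGroup H] [InnerProductSpace ℂ H] [CompleteSpace H]

noncomputable def thetaAux (e : ℕ → H)
    (hmem : ∀ f : H, Memℓp (fun k => ⟪e k, f⟫) 2)
    (B : ℝ) (hB : 0 < B) (hb : ∀ f : H, ∑' k, ‖⟪e k, f⟫‖ ^ 2 ≤ B * ‖f‖ ^ 2) :
    H →L[ℂ] lp (fun _ : ℕ => ℂ) 2 :=
  LinearMap.mkContinuous
    { toFun := fun f => ⟨fun k => ⟪e k, f⟫, hmem f⟩
      map_add' := fun x y => by
        apply lp.ext; funext k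
        simp [inner_add_right]
        rfl
      map_smul' := fun c x => by
        apply lp.ext; funext k
        simp [inner_smul_right] }
    (Real.sqrt B)
    (by
      intro f
      have h1 : ‖(⟨fun k => ⟪e k, f⟫, hmem f⟩ : lp (fun _ : ℕ => ℂ) 2)‖ ^ 2
          ≤ (Real.sqrt B * ‖f‖) ^ 2 := by
        rw [lp_norm_sq_aux, mul_pow, Real.sq_sqrt hB.le]
        exact hb f
      have h2 : (0:ℝ) ≤ Real.sqrt B * ‖f‖ := by positivity
      exact (pow_le_pow_iff_left₀ (norm_nonneg _) h2 two_ne_zero).mp h1)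

lemma thetaAux_apply (e : ℕ → H) (hmem) (B : ℝ) (hB) (hb) (f : H) (k : ℕ) :
    (thetaAux e hmem B hB hb f : ∀ _ : ℕ, ℂ) k = ⟪e k, f⟫ := rfl

end

/-- If the orbit `{T^k φ}_{k=0}^∞` of a bounded operator `T` is a frame for a
complex Hilbert space `H`, then `T` has closed range. -/
theorem closed_range_of_orbit_frame
    {H : Type*} [NormedAddCommGroup H] [InnerProductSpace ℂ H] [CompleteSpace H]
    (T : H →L[ℂ] H) (φ : H)
    (hframe : ∃ A B : ℝ, 0 < A ∧ 0 < B ∧ ∀ f : H,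
      A * ‖f‖ ^ 2 ≤ ∑' k : ℕ, ‖⟪f, (T ^ k) φ⟫‖ ^ 2 ∧
      ∑' k : ℕ, ‖⟪f, (T ^ k) φ⟫‖ ^ 2 ≤ B * ‖f‖ ^ 2) :
    IsClosed (Set.range T) := by
  classical
  obtain ⟨A, B, hA, hB, hf⟩ := hframe
  set e : ℕ → H := fun k => (T ^ k) φ with he
  have he0 : e 0 = φ := by simp [he]
  have hesucc : ∀ k, e (k + 1) = T (e k) := by
    intro k
    simp only [he, pow_succ']
    rfl
  have htseq : ∀ f : H, ∑' k, ‖⟪f, e k⟫‖ ^ 2 = ∑' k, ‖⟪e k, f⟫‖ ^ 2 :=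
    fun f => tsum_congr fun k => by rw [norm_inner_symm]
  -- lower and upper bounds in symmetric form
  have hlow : ∀ f : H, A * ‖f‖ ^ 2 ≤ ∑' k, ‖⟪e k, f⟫‖ ^ 2 :=
    fun f => (htseq f) ▸ (hf f).1
  have hupp : ∀ f : H, ∑' k, ‖⟪e k, f⟫‖ ^ 2 ≤ B * ‖f‖ ^ 2 :=
    fun f => (htseq f) ▸ (hf f).2
  have hzero : ∀ f : H, A * ‖f‖ ^ 2 ≤ 0 → f = 0 := by
    intro f hle
    have h2 : ‖f‖ ^ 2 ≤ 0 := by nlinarith [sq_nonneg ‖f‖]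
    have h3 : ‖f‖ ^ 2 = 0 := le_antisymm h2 (sq_nonneg _)
    exact norm_eq_zero.mp (pow_eq_zero_iff two_ne_zero |>.mp h3)
  -- summability
  have hsum : ∀ f : H, Summable fun k => ‖⟪e k, f⟫‖ ^ 2 := by
    intro f
    by_contra hs
    have h0 := tsum_eq_zero_of_not_summable hs
    have h1 := hlow f
    rw [h0] at h1
    have hf0 : f = 0 := hzero f h1
    apply hs
    simpa [hf0] using summable_zero
  have hmem : ∀ f : H, Memℓp (fun k => ⟪e k, f⟫) 2 := by
    intro f
    apply memℓp_gen
    convert hsum f using 2 with k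
    norm_num
  set Θ : H →L[ℂ] lp (fun _ : ℕ => ℂ) 2 := thetaAux e hmem B hB hupp with hΘ
  set S : H →L[ℂ] H := (ContinuousLinearMap.adjoint Θ).comp Θ with hSdef
  have hΘapp : ∀ (f : H) (k : ℕ), (Θ f : ∀ _ : ℕ, ℂ) k = ⟪e k, f⟫ := fun f k => rfl
  have hS : ∀ f g : H, ⟪g, S f⟫ = ∑' k, ⟪g, e k⟫ * ⟪e k, f⟫ := by
    intro f g
    have h1 : ⟪g, S f⟫ = ⟪Θ g, Θ f⟫ := by
      rw [hSdef, ContinuousLinearMap.comp_apply]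
      exact ContinuousLinearMap.adjoint_inner_right Θ g (Θ f)
    rw [h1, lp.inner_eq_tsum]
    exact tsum_congr fun k => by
      rw [hΘapp, hΘapp, RCLike.inner_apply, inner_conj_symm, mul_comm]
  have hsum2 : ∀ f g : H, Summable fun k => ⟪g, e k⟫ * ⟪e k, f⟫ := by
    intro f g
    have h1 := lp.summable_inner (𝕜 := ℂ) (Θ g) (Θ f)
    refine h1.congr fun k => ?_
    rw [hΘapp, hΘapp, RCLike.inner_apply, inner_conj_symm, mul_comm]
  have hΘnorm : ∀ f : H, ‖Θ f‖ ^ 2 = ∑' k, ‖⟪e k, f⟫‖ ^ 2 := by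
    intro f
    rw [lp_norm_sq_aux (Θ f)]
    exact tsum_congr fun k => by rw [hΘapp]
  have hSinner : ∀ f : H, ⟪f, S f⟫ = ((‖Θ f‖ ^ 2 : ℝ) : ℂ) := by
    intro f
    rw [hSdef, ContinuousLinearMap.comp_apply, ContinuousLinearMap.adjoint_inner_right,
      inner_self_eq_norm_sq_to_K]
    norm_num
  let T' := ContinuousLinearMap.adjoint T
  have hT' : T' = ContinuousLinearMap.adjoint T := rfl
  -- the key identity
  have hkey : ∀ f : H, S f = ⟪φ, f⟫ • φ + T (S (T' f)) := by
    intro f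
    apply ext_inner_left ℂ
    intro g
    rw [hS, Summable.tsum_eq_zero_add (hsum2 f g), inner_add_right]
    congr 1
    · rw [he0, inner_smul_right]; ring
    · have hterm : ∀ k : ℕ, ⟪g, e (k+1)⟫ * ⟪e (k+1), f⟫ = ⟪T' g, e k⟫ * ⟪e k, T' f⟫ := by
        intro k
        rw [hesucc]
        rw [← ContinuousLinearMap.adjoint_inner_left T (e k) g]
        rw [← ContinuousLinearMap.adjoint_inner_right T (e k) f]
      rw [tsum_congr hterm, ← hS]
      rw [← ContinuousLinearMap.adjoint_inner_left T]
  -- coercivity consequences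
  have hΘlow : ∀ f : H, A * ‖f‖ ^ 2 ≤ ‖Θ f‖ ^ 2 := fun f => (hΘnorm f) ▸ hlow f
  have hΘzero : ∀ f : H, ‖Θ f‖ = 0 → f = 0 := by
    intro f h0
    have h1 := hΘlow f
    rw [h0] at h1
    simp only [ne_eq, OfNat.ofNat_ne_zero, not_false_eq_true, zero_pow] at h1
    exact hzero f h1
  -- S is surjective
  have hbelow : ∀ f : H, A * ‖f‖ ≤ ‖S f‖ := by
    intro f
    rcases eq_or_ne f 0 with rfl | hne
    · simp
    have hfpos : 0 < ‖f‖ := norm_pos_iff.mpr hne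
    have h1 : A * ‖f‖ ^ 2 ≤ ‖Θ f‖ ^ 2 := hΘlow f
    have h2 : (‖Θ f‖ ^ 2 : ℝ) ≤ ‖f‖ * ‖S f‖ := by
      have h3 : ‖⟪f, S f⟫‖ ≤ ‖f‖ * ‖S f‖ := norm_inner_le_norm f (S f)
      rwa [hSinner f, Complex.norm_real, Real.norm_eq_abs,
        abs_of_nonneg (by positivity : (0:ℝ) ≤ ‖Θ f‖ ^ 2)] at h3
    have h4 : A * ‖f‖ * ‖f‖ ≤ ‖S f‖ * ‖f‖ := by
      calc A * ‖f‖ * ‖f‖ = A * ‖f‖ ^ 2 := by ring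
        _ ≤ ‖f‖ * ‖S f‖ := le_trans h1 h2
        _ = ‖S f‖ * ‖f‖ := by ring
    exact le_of_mul_le_mul_right h4 hfpos
  have hSsurj : Function.Surjective S := by
    have hanti : AntilipschitzWith ⟨A⁻¹, by positivity⟩ S := by
      apply AddMonoidHomClass.antilipschitz_of_bound
      intro x
      have h1 := hbelow x
      have h2 : A⁻¹ * (A * ‖x‖) ≤ A⁻¹ * ‖S x‖ :=
        mul_le_mul_of_nonneg_left h1 (by positivity)
      calc ‖x‖ = A⁻¹ * (A * ‖x‖) := by field_simp
        _ ≤ A⁻¹ * ‖S x‖ := h2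
        _ = (⟨A⁻¹, by positivity⟩ : NNReal) * ‖S x‖ := rfl
    have hclosed : IsClosed (Set.range S) := hanti.isClosed_range S.uniformContinuous
    have hrng : ((LinearMap.range (S : H →ₗ[ℂ] H) : Submodule ℂ H) : Set H) = Set.range S :=
      LinearMap.coe_range _
    haveI : CompleteSpace (LinearMap.range (S : H →ₗ[ℂ] H) : Submodule ℂ H) := by
      refine IsClosed.completeSpace_coe (hs := ?_)
      rw [hrng]; exact hclosed
    have horth : (LinearMap.range (S : H →ₗ[ℂ] H) : Submodule ℂ H)ᗮ = ⊥ := by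
      rw [Submodule.eq_bot_iff]
      intro v hv
      have h0 : ⟪S v, v⟫ = 0 :=
        (Submodule.mem_orthogonal _ v).mp hv (S v) (LinearMap.mem_range_self _ v)
      have h1 : ⟪v, S v⟫ = 0 := by rw [← inner_conj_symm, h0, map_zero]
      rw [hSinner v] at h1
      have h2 : ‖Θ v‖ ^ 2 = 0 := Complex.ofReal_eq_zero.mp h1
      exact hΘzero v (pow_eq_zero_iff two_ne_zero |>.mp h2)
    have htop : (LinearMap.range (S : H →ₗ[ℂ] H) : Submodule ℂ H) = ⊤ :=
      Submodule.orthogonal_eq_bot_iff.mp horth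
    intro y
    have : y ∈ LinearMap.range (S : H →ₗ[ℂ] H) := htop ▸ Submodule.mem_top
    exact this
  -- the decomposition: every f is ⟪φ, g⟫ • φ + T (S (T' g)) for some g
  have hdec : ∀ f : H, ∃ g : H, S g = f ∧ f = ⟪φ, g⟫ • φ + T (S (T' g)) := by
    intro f
    obtain ⟨g, hg⟩ := hSsurj f
    exact ⟨g, hg, by rw [← hg]; exact hkey g⟩
  -- pick g₀ with S g₀ = φ
  obtain ⟨g₀, hg₀, hg₀'⟩ := hdec φ
  set b : ℂ := ⟪φ, g₀⟫ with hb
  by_cases hb1 : b = 1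
  · -- degenerate case: T' g₀ = 0 and range T = ker ⟪g₀, ·⟫
    have ha1 : ⟪g₀, φ⟫ = 1 := by
      rw [← inner_conj_symm, ← hb, hb1, map_one]
    -- compute ⟪g₀, φ⟫ via the decomposition
    have hcomp : ⟪g₀, φ⟫ = b * ⟪g₀, φ⟫ + ⟪T' g₀, S (T' g₀)⟫ := by
      conv_lhs => rw [hg₀']
      rw [inner_add_right, inner_smul_right, ← ContinuousLinearMap.adjoint_inner_left T]
    rw [ha1, hb1, one_mul] at hcomp
    have hz : ⟪T' g₀, S (T' g₀)⟫ = 0 := by linear_combination hcomp.symm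
    have hTg0 : T' g₀ = 0 := by
      rw [hSinner] at hz
      have h2 : ‖Θ (T' g₀)‖ ^ 2 = 0 := Complex.ofReal_eq_zero.mp hz
      exact hΘzero _ (pow_eq_zero_iff two_ne_zero |>.mp h2)
    have hrange : Set.range T = {f : H | ⟪g₀, f⟫ = 0} := by
      apply Set.eq_of_subset_of_subset
      · rintro _ ⟨h, rfl⟩
        show ⟪g₀, T h⟫ = 0
        rw [← ContinuousLinearMap.adjoint_inner_left T, ← hT', hTg0, inner_zero_left]
      · intro f hfmem
        obtain ⟨g, hg, hgdec⟩ := hdec f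
        have h0 : ⟪g₀, f⟫ = 0 := hfmem
        have h1 : ⟪g₀, f⟫ = ⟪φ, g⟫ * ⟪g₀, φ⟫ + ⟪T' g₀, S (T' g)⟫ := by
          conv_lhs => rw [hgdec]
          rw [inner_add_right, inner_smul_right, ← ContinuousLinearMap.adjoint_inner_left T]
        rw [h0, ha1, hTg0, inner_zero_left, mul_one, add_zero] at h1
        refine ⟨S (T' g), ?_⟩
        rw [hgdec, ← h1, zero_smul, zero_add]
    rw [hrange]
    have : {f : H | ⟪g₀, f⟫ = 0} = (innerSL ℂ g₀) ⁻¹' {0} := rfl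
    rw [this]
    exact IsClosed.preimage (innerSL ℂ g₀).continuous isClosed_singleton
  · -- T is surjective
    have hφrange : φ ∈ Set.range T := by
      have h1 : (1 - b) • φ = T (S (T' g₀)) := by
        rw [sub_smul, one_smul]
        exact sub_eq_iff_eq_add'.mpr hg₀'
      refine ⟨(1 - b)⁻¹ • S (T' g₀), ?_⟩
      rw [map_smul, ← h1, smul_smul, inv_mul_cancel₀ (sub_ne_zero.mpr (Ne.symm hb1)), one_smul]
    obtain ⟨w, hw⟩ := hφrange
    have hsurjT : Function.Surjective T := by
      intro f
      obtain ⟨g, hg, hgdec⟩ := hdec f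
      refine ⟨⟪φ, g⟫ • w + S (T' g), ?_⟩
      rw [map_add, map_smul, hw, ← hgdec]
    rw [hsurjT.range_eq]
    exact isClosed_univ
end

section
/- Let H be a complex Hilbert space, T a bounded linear operator on H, and f ∈ H such that {T^n f}_{n=0}^∞ is a frame for H. Then for every φ ∈ H, (T*)^n φ → 0 in norm as n → ∞. -/
/-!
The frame inequality for `g = (T*)^k φ` reads `A ‖(T*)^k φ‖² ≤ ∑ₙ |⟪φ, T^(n+k) f⟫|²`, since
`⟪(T*)^k φ, T^n f⟫ = ⟪φ, T^(n+k) f⟫`. The right-hand side is the `k`-th tail of the sequence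
`|⟪φ, T^n f⟫|²`, which tends to zero.
-/

open Filter Topology
open scoped ComplexInnerProductSpace

/-- No summability hypothesis on `c` is needed: if `c` is not summable, every tail `tsum` is `0`. -/
theorem tendsto_zero_of_mul_norm_sq_le_tsum_nat_add {E : Type*} [SeminormedAddCommGroup E]
    {x : ℕ → E} {c : ℕ → ℝ} {A : ℝ} (hA : 0 < A)
    (h : ∀ k, A * ‖x k‖ ^ 2 ≤ ∑' n, c (n + k)) : Tendsto x atTop (𝓝 0) := by
  have hsq : Tendsto (fun k => A * ‖x k‖ ^ 2) atTop (𝓝 0) :=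
    squeeze_zero (fun k => by positivity) h (tendsto_sum_nat_add c)
  have hnorm : Tendsto (fun k => ‖x k‖) atTop (𝓝 0) := by
    simpa [hA.ne', Real.sqrt_sq (norm_nonneg _)] using
      ((hsq.const_mul A⁻¹).sqrt)
  exact tendsto_zero_iff_norm_tendsto_zero.mpr hnorm

theorem ContinuousLinearMap.inner_adjoint_pow_apply_pow_apply {𝕜 H : Type*} [RCLike 𝕜]
    [NormedAddCommGroup H] [InnerProductSpace 𝕜 H] [CompleteSpace H]
    (T : H →L[𝕜] H) (x y : H) (k n : ℕ) :
    inner 𝕜 ((adjoint T ^ k) x) ((T ^ n) y) = inner 𝕜 x ((T ^ (n + k)) y) := by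
  rw [← star_eq_adjoint, ← star_pow, star_eq_adjoint, adjoint_inner_left, add_comm, pow_add,
    mul_apply_eq_comp]

/-- If `{T^n f}_{n=0}^∞` is a frame for a complex Hilbert space `H`, then the
iterates of the adjoint of `T` tend to zero pointwise in norm. -/
theorem adjoint_pow_tendsto_zero_of_orbit_frame
    {H : Type*} [NormedAddCommGroup H] [InnerProductSpace ℂ H] [CompleteSpace H]
    (T : H →L[ℂ] H) (f : H)
    (hframe : ∃ A B : ℝ, 0 < A ∧ 0 < B ∧ ∀ g : H,
      A * ‖g‖ ^ 2 ≤ ∑' n : ℕ, ‖⟪g, (T ^ n) f⟫‖ ^ 2 ∧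
      ∑' n : ℕ, ‖⟪g, (T ^ n) f⟫‖ ^ 2 ≤ B * ‖g‖ ^ 2) :
    ∀ φ : H, Filter.Tendsto (fun n : ℕ => ((ContinuousLinearMap.adjoint T) ^ n) φ)
      Filter.atTop (nhds 0) := by
  obtain ⟨A, _, hA, _, hlower⟩ := hframe
  intro φ
  refine tendsto_zero_of_mul_norm_sq_le_tsum_nat_add (c := fun n => ‖⟪φ, (T ^ n) f⟫‖ ^ 2) hA
    fun k => ?_
  simpa only [T.inner_adjoint_pow_apply_pow_apply] using
    (hlower ((ContinuousLinearMap.adjoint T ^ k) φ)).1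
end

section
/- Let T be a bounded self-adjoint operator on a complex Hilbert space H and let φ ∈ H. Then there exists a positive Borel measure μ_φ on the spectrum σ(T) with μ_φ(σ(T)) = ‖φ‖² such that ⟨φ, f(T)φ⟩ = ∫_{σ(T)} f(λ) dμ_φ(λ) for every continuous function f : σ(T) → ℂ, where f(T) is given by the continuous functional calculus. -/
open scoped ComplexInnerProductSpace
open MeasureTheory
open Set

noncomputable section SpectralMeasureAux

namespace SpectralMeasureAux

/-- Continuous cutoff: `1` on `(-∞, t]`, `0` on `[t+δ, ∞)`, linear in between. -/
def gcut (t δ : ℝ) : C(ℝ, ℝ) :=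
  ⟨fun x => max 0 (min 1 ((t + δ - x) / δ)), by fun_prop⟩

lemma gcut_nonneg (t δ x : ℝ) : 0 ≤ gcut t δ x := le_max_left _ _

lemma gcut_le_one (t δ x : ℝ) : gcut t δ x ≤ 1 :=
  max_le zero_le_one (min_le_left _ _)

lemma gcut_eq_one {t δ x : ℝ} (hδ : 0 < δ) (hx : x ≤ t) : gcut t δ x = 1 := by
  have h1 : (1 : ℝ) ≤ (t + δ - x) / δ := by
    rw [le_div_iff₀ hδ]; linarith
  simp only [gcut, ContinuousMap.coe_mk]
  rw [min_eq_left h1, max_eq_right zero_le_one]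

lemma gcut_eq_zero {t δ x : ℝ} (hδ : 0 < δ) (hx : t + δ ≤ x) : gcut t δ x = 0 := by
  have h1 : (t + δ - x) / δ ≤ 0 := div_nonpos_of_nonpos_of_nonneg (by linarith) hδ.le
  simp only [gcut, ContinuousMap.coe_mk]
  rw [min_eq_right (h1.trans zero_le_one), max_eq_left h1]

lemma gcut_mono_t {t t' : ℝ} (δ : ℝ) (hδ : 0 < δ) (h : t ≤ t') (x : ℝ) :
    gcut t δ x ≤ gcut t' δ x := by
  simp only [gcut, ContinuousMap.coe_mk]
  have hd : (t + δ - x) / δ ≤ (t' + δ - x) / δ :=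
    by gcongr <;> linarith
  exact max_le_max le_rfl (min_le_min le_rfl hd)

lemma gcut_mono_δ {δ δ' : ℝ} (t : ℝ) (hδ : 0 < δ) (h : δ ≤ δ') (x : ℝ) :
    gcut t δ x ≤ gcut t δ' x := by
  rcases le_or_gt x t with hx | hx
  · rw [gcut_eq_one hδ hx, gcut_eq_one (hδ.trans_le h) hx]
  · simp only [gcut, ContinuousMap.coe_mk]
    have h1 : (t + δ - x) / δ = 1 - (x - t) / δ := by field_simp; ring
    have h2 : (t + δ' - x) / δ' = 1 - (x - t) / δ' := by
      have : (0:ℝ) < δ' := hδ.trans_le h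
      field_simp; ring
    have hd : (t + δ - x) / δ ≤ (t + δ' - x) / δ' := by
      rw [h1, h2]
      have : (x - t) / δ' ≤ (x - t) / δ :=
        div_le_div_of_nonneg_left (by linarith) hδ h
      linarith
    exact max_le_max le_rfl (min_le_min le_rfl hd)

/-- If `s + δ' ≤ t` then the cutoff at `s` with width `δ'` is below the cutoff at `t`. -/
lemma gcut_le_gcut {s δ' t δ : ℝ} (hδ' : 0 < δ') (hδ : 0 < δ) (h : s + δ' ≤ t) (x : ℝ) :
    gcut s δ' x ≤ gcut t δ x := by
  rcases le_or_gt x t with hx | hx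
  · rw [gcut_eq_one hδ hx]; exact gcut_le_one _ _ _
  · rw [gcut_eq_zero hδ' (by linarith)]; exact gcut_nonneg _ _ _

/-- Key bound for right-continuity: the cutoff at `s ≥ t` exceeds the one at `t`
by at most `(s + δ' - t)/δ`. -/
lemma gcut_le_gcut_add {t s δ δ' : ℝ} (hδ : 0 < δ) (hδ' : 0 < δ') (hts : t ≤ s) (x : ℝ) :
    gcut s δ' x ≤ gcut t δ x + (s + δ' - t) / δ := by
  have hc : 0 ≤ (s + δ' - t) / δ := div_nonneg (by linarith) hδ.le
  rcases le_or_gt (s + δ') x with hx | hx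
  · rw [gcut_eq_zero hδ' (by linarith)]
    exact add_nonneg (gcut_nonneg _ _ _) hc
  · -- x < s + δ' : then gcut t δ x ≥ 1 - (s + δ' - t)/δ
    have h1 : gcut s δ' x ≤ 1 := gcut_le_one _ _ _
    have h2 : min 1 ((t + δ - x) / δ) ≤ gcut t δ x := le_max_right _ _
    have h3 : (1 : ℝ) - (s + δ' - t) / δ ≤ min 1 ((t + δ - x) / δ) := by
      apply le_min (by linarith)
      have key : (t + δ - x) / δ - (1 - (s + δ' - t) / δ) = (s + δ' - x) / δ := by
        field_simp; ring
      have : 0 ≤ (s + δ' - x) / δ := div_nonneg (by linarith) hδ.le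
      linarith
    linarith

variable (L : C(ℝ, ℝ) →ₗ[ℝ] ℝ)

/-- The candidate cumulative distribution function. -/
def F (t : ℝ) : ℝ := sInf ((fun δ => L (gcut t δ)) '' Ioi (0 : ℝ))

section Hpos

/-- Positivity hypothesis abbreviation. -/
def Hpos : Prop := ∀ f : C(ℝ, ℝ), (∀ x, 0 ≤ f x) → 0 ≤ L f

lemma Lmono (hpos : Hpos L) {f g : C(ℝ, ℝ)} (h : ∀ x, f x ≤ g x) : L f ≤ L g := by
  have h0 := hpos (g - f) (fun x => by simpa using sub_nonneg.2 (h x))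
  rw [map_sub] at h0; linarith

lemma M_nonneg (hpos : Hpos L) : 0 ≤ L 1 := hpos 1 (fun x => by simp)

lemma F_bddBelow (hpos : Hpos L) (t : ℝ) : BddBelow ((fun δ => L (gcut t δ)) '' Ioi (0 : ℝ)) :=
  ⟨0, by rintro y ⟨δ, hδ, rfl⟩; exact hpos _ (gcut_nonneg t δ)⟩

lemma F_nonempty (t : ℝ) : ((fun δ => L (gcut t δ)) '' Ioi (0 : ℝ)).Nonempty :=
  ⟨_, ⟨1, mem_Ioi.2 one_pos, rfl⟩⟩

lemma F_nonneg (hpos : Hpos L) (t : ℝ) : 0 ≤ F L t :=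
  le_csInf (F_nonempty L t) (by rintro y ⟨δ, hδ, rfl⟩; exact hpos _ (gcut_nonneg t δ))

lemma F_le (hpos : Hpos L) (t : ℝ) (hδ : 0 < δ) : F L t ≤ L (gcut t δ) :=
  csInf_le (F_bddBelow L hpos t) ⟨δ, hδ, rfl⟩

lemma F_approx (hpos : Hpos L) (t : ℝ) {ε : ℝ} (hε : 0 < ε) :
    ∃ δ > 0, L (gcut t δ) < F L t + ε := by
  obtain ⟨y, ⟨δ, hδ, rfl⟩, hy⟩ :=
    exists_lt_of_csInf_lt (F_nonempty L t) (lt_add_of_pos_right (F L t) hε)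
  exact ⟨δ, hδ, hy⟩

lemma F_mono (hpos : Hpos L) : Monotone (F L) := by
  intro u v huv
  refine le_csInf (F_nonempty L v) ?_
  rintro y ⟨δ, hδ, rfl⟩
  exact (F_le L hpos u hδ).trans (Lmono L hpos (gcut_mono_t δ hδ huv))

lemma F_rightCont (hpos : Hpos L) (t : ℝ) : ContinuousWithinAt (F L) (Ici t) t := by
  rw [Metric.continuousWithinAt_iff]
  intro ε hε
  obtain ⟨δ, hδ, hLδ⟩ := F_approx L hpos t (half_pos hε)
  set M := L 1 with hMdef
  have hM : 0 ≤ M := M_nonneg L hpos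
  set η : ℝ := min 1 (δ * ε / (4 * (M + 1))) with hηdef
  have hη : 0 < η := lt_min one_pos (by positivity)
  refine ⟨η, hη, fun s hs hdist => ?_⟩
  have hts : t ≤ s := hs
  have hst : s - t < η := by
    rw [Real.dist_eq, abs_of_nonneg (by linarith)] at hdist; linarith
  have hFmono := F_mono L hpos hts
  rw [Real.dist_eq, abs_of_nonneg (by linarith [hFmono] : (0:ℝ) ≤ F L s - F L t)]
  -- F L s ≤ L (gcut s η) ≤ L (gcut t δ) + c * M with c small
  have hpt : ∀ x, gcut s η x ≤ (gcut t δ + ((s + η - t) / δ) • (1 : C(ℝ, ℝ))) x := by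
    intro x
    simpa using gcut_le_gcut_add hδ hη hts x
  have h1 : F L s ≤ L (gcut s η) := F_le L hpos s hη
  have h2 : L (gcut s η) ≤ L (gcut t δ) + ((s + η - t) / δ) * M := by
    have := Lmono L hpos hpt
    rwa [map_add, _root_.map_smul, smul_eq_mul] at this
  have hc : (s + η - t) / δ * M ≤ ε / 2 := by
    set c : ℝ := (s + η - t) / δ with hcdef
    have hcδ : c * δ = s + η - t := div_mul_cancel₀ _ hδ.ne'
    have hc0 : 0 ≤ c := div_nonneg (by linarith) hδ.le
    have hη2 : η * (4 * (M + 1)) ≤ δ * ε := by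
      have hη2' : η ≤ δ * ε / (4 * (M + 1)) := min_le_right _ _
      rw [le_div_iff₀ (by positivity)] at hη2'
      exact hη2'
    have h6 : c * (4 * (M + 1)) ≤ 2 * ε := by
      have h7 : c * δ * (4 * (M + 1)) ≤ 2 * η * (4 * (M + 1)) := by
        apply mul_le_mul_of_nonneg_right (by linarith) (by positivity)
      have h8 : c * (4 * (M + 1)) * δ ≤ (2 * ε) * δ := by nlinarith
      exact le_of_mul_le_mul_right h8 hδ
    nlinarith [mul_nonneg hc0 hM]
  linarith

/-- The Stieltjes function associated to the functional `L`. -/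
def stieltjes (hpos : Hpos L) : StieltjesFunction ℝ where
  toFun := F L
  mono' := F_mono L hpos
  right_continuous' := F_rightCont L hpos

@[simp] lemma stieltjes_apply (hpos : Hpos L) (t : ℝ) : stieltjes L hpos t = F L t := rfl

end Hpos

section Local

variable {K : Set ℝ}

/-- Locality: `L` only depends on values on `K`. -/
def Hloc (L : C(ℝ, ℝ) →ₗ[ℝ] ℝ) (K : Set ℝ) : Prop :=
  ∀ f g : C(ℝ, ℝ), (∀ x ∈ K, f x = g x) → L f = L g

lemma F_eq_zero (hpos : Hpos L) (hloc : Hloc L K) {t : ℝ} (h : ∀ x ∈ K, t + 1 ≤ x) :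
    F L t = 0 := by
  refine le_antisymm ?_ (F_nonneg L hpos t)
  have h1 : L (gcut t (1/2)) = L 0 := by
    apply hloc
    intro x hx
    rw [gcut_eq_zero (by norm_num) (by linarith [h x hx])]
    simp
  have := F_le L hpos t (show (0:ℝ) < 1/2 by norm_num)
  rw [h1, map_zero] at this
  exact this

lemma F_eq_M (hpos : Hpos L) (hloc : Hloc L K) {t : ℝ} (h : ∀ x ∈ K, x ≤ t) :
    F L t = L 1 := by
  have key : ∀ δ : ℝ, 0 < δ → L (gcut t δ) = L 1 := by
    intro δ hδ
    apply hloc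
    intro x hx
    rw [gcut_eq_one hδ (h x hx)]
    simp
  refine le_antisymm ?_ ?_
  · have := F_le L hpos t one_pos
    rwa [key 1 one_pos] at this
  · refine le_csInf (F_nonempty L t) ?_
    rintro y ⟨δ, hδ, rfl⟩
    show L 1 ≤ L (gcut t δ)
    rw [key δ hδ]

/-- The Stieltjes measure gives no mass outside of the (compact) set `K`. -/
lemma measure_compl_K (hpos : Hpos L) (hK : IsCompact K) (hloc : Hloc L K) :
    (stieltjes L hpos).measure Kᶜ = 0 := by
  apply measure_null_of_locally_null
  intro x hx
  obtain ⟨r, hr, hball⟩ := Metric.isOpen_iff.1 hK.isClosed.isOpen_compl x hx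
  refine ⟨Metric.ball x r, mem_nhdsWithin_of_mem_nhds (Metric.ball_mem_nhds x hr), ?_⟩
  rw [Real.ball_eq_Ioo]
  -- F is constant on the interval `Ioo (x-r) (x+r)`
  have hconst : ∀ s ∈ Ioo (x - r) (x + r), ∀ s' ∈ Ioo (x - r) (x + r), s ≤ s' →
      F L s' = F L s := by
    intro s hs s' hs' hss'
    refine le_antisymm ?_ (F_mono L hpos hss')
    refine le_of_forall_pos_le_add ?_
    intro ε hε
    obtain ⟨δ, hδ, hLδ⟩ := F_approx L hpos s hε
    set δ' : ℝ := min δ ((x + r - s') / 2) with hδ'def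
    have hδ'pos : 0 < δ' := lt_min hδ (by simpa using sub_pos.2 hs'.2)
    have hδ'lt : s' + δ' < x + r := by
      have : δ' ≤ (x + r - s') / 2 := min_le_right _ _
      have h2 : (x + r - s') / 2 < x + r - s' := by
        have := sub_pos.2 hs'.2
        linarith
      linarith
    have heq : L (gcut s' δ') = L (gcut s δ') := by
      apply hloc
      intro y hy
      have hy' : y ∉ Ioo (x - r) (x + r) := fun hmem => by
        have : y ∈ Metric.ball x r := by rw [Real.ball_eq_Ioo]; exact hmem
        exact hball this hy
      rcases le_or_gt y (x - r) with h1 | h1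
      · rw [gcut_eq_one hδ'pos (le_of_lt (h1.trans_lt hs'.1)),
          gcut_eq_one hδ'pos (le_of_lt (h1.trans_lt hs.1))]
      · have h2 : x + r ≤ y := by
          by_contra h3
          exact hy' ⟨h1, lt_of_not_ge h3⟩
        rw [gcut_eq_zero hδ'pos (by linarith), gcut_eq_zero hδ'pos (by linarith)]
    calc F L s' ≤ L (gcut s' δ') := F_le L hpos s' hδ'pos
      _ = L (gcut s δ') := heq
      _ ≤ L (gcut s δ) := Lmono L hpos (gcut_mono_δ s hδ'pos (min_le_left _ _))
      _ ≤ F L s + ε := hLδ.le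
  have hxmem : x ∈ Ioo (x - r) (x + r) := by constructor <;> linarith
  set c : ℝ := F L x with hcdef
  have hFc : ∀ s ∈ Ioo x (x + r), F L s = c := fun s hs =>
    hconst x hxmem s ⟨by linarith [hs.1], hs.2⟩ hs.1.le
  -- leftLim at x + r equals c
  have hleft : Function.leftLim (F L) (x + r) = c := by
    apply leftLim_eq_of_tendsto
    apply Filter.Tendsto.congr' _ tendsto_const_nhds
    filter_upwards [Ioo_mem_nhdsLT_of_mem
      (show x + r ∈ Ioc x (x + r) by constructor <;> linarith)] with s hs
    exact (hFc s hs).symm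
  -- F (x - r) equals c
  have hright : F L (x - r) = c := by
    have ht1 : Filter.Tendsto (F L) (nhdsWithin (x - r) (Ioi (x - r))) (nhds (F L (x - r))) :=
      ((stieltjes L hpos).right_continuous' (x - r)).tendsto.mono_left
        (nhdsWithin_mono _ Ioi_subset_Ici_self)
    have ht2 : Filter.Tendsto (F L) (nhdsWithin (x - r) (Ioi (x - r))) (nhds c) := by
      apply Filter.Tendsto.congr' _ tendsto_const_nhds
      filter_upwards [Ioo_mem_nhdsGT_of_mem
        (show x - r ∈ Ico (x - r) x by constructor <;> linarith)] with s hs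
      exact hconst s ⟨hs.1, by linarith [hs.2]⟩ x hxmem hs.2.le
    exact tendsto_nhds_unique ht1 ht2
  rw [StieltjesFunction.measure_Ioo]
  have : Function.leftLim (⇑(stieltjes L hpos)) (x + r) - (stieltjes L hpos) (x - r) = 0 := by
    show Function.leftLim (F L) (x + r) - F L (x - r) = 0
    rw [hleft, hright, sub_self]
  rw [this, ENNReal.ofReal_zero]

end Local

section Main

variable {K : Set ℝ} {a b : ℝ}

lemma tendsto_F_atBot (hpos : Hpos L) (hloc : Hloc L K) (ha : ∀ x ∈ K, a + 1 ≤ x) :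
    Filter.Tendsto (F L) Filter.atBot (nhds 0) := by
  apply Filter.Tendsto.congr' _ tendsto_const_nhds
  filter_upwards [Filter.eventually_atBot.2 ⟨a, fun t (ht : t ≤ a) => ht⟩] with t ht
  exact (F_eq_zero L hpos hloc (fun x hx => by linarith [ha x hx])).symm

lemma tendsto_F_atTop (hpos : Hpos L) (hloc : Hloc L K) (hb : ∀ x ∈ K, x + 1 ≤ b) :
    Filter.Tendsto (F L) Filter.atTop (nhds (L 1)) := by
  apply Filter.Tendsto.congr' _ tendsto_const_nhds
  filter_upwards [Filter.eventually_atTop.2 ⟨b, fun t (ht : b ≤ t) => ht⟩] with t ht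
  exact (F_eq_M L hpos hloc (fun x hx => by linarith [hb x hx])).symm

lemma measure_univ_eq (hpos : Hpos L) (hloc : Hloc L K)
    (ha : ∀ x ∈ K, a + 1 ≤ x) (hb : ∀ x ∈ K, x + 1 ≤ b) :
    (stieltjes L hpos).measure univ = ENNReal.ofReal (L 1) := by
  rw [(stieltjes L hpos).measure_univ (l := 0) (u := L 1)
    (tendsto_F_atBot L hpos hloc ha) (tendsto_F_atTop L hpos hloc hb), sub_zero]

lemma isFiniteMeasure (hpos : Hpos L) (hloc : Hloc L K)
    (ha : ∀ x ∈ K, a + 1 ≤ x) (hb : ∀ x ∈ K, x + 1 ≤ b) :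
    IsFiniteMeasure (stieltjes L hpos).measure :=
  ⟨by rw [measure_univ_eq L hpos hloc ha hb]; exact ENNReal.ofReal_lt_top⟩

lemma restrict_Ioc (hpos : Hpos L) (hloc : Hloc L K)
    (ha : ∀ x ∈ K, a + 1 ≤ x) (hb : ∀ x ∈ K, x + 1 ≤ b) :
    (stieltjes L hpos).measure.restrict (Ioc a b) = (stieltjes L hpos).measure := by
  set μ := (stieltjes L hpos).measure with hμ
  have hFa : F L a = 0 := F_eq_zero L hpos hloc (fun x hx => ha x hx)
  have hFb : F L b = L 1 := F_eq_M L hpos hloc (fun x hx => by linarith [hb x hx])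
  have hIoc : μ (Ioc a b) = ENNReal.ofReal (L 1) := by
    rw [hμ, StieltjesFunction.measure_Ioc]
    show ENNReal.ofReal (F L b - F L a) = _
    rw [hFa, hFb, sub_zero]
  have huniv : μ univ = ENNReal.ofReal (L 1) := measure_univ_eq L hpos hloc ha hb
  have hcompl : μ (Ioc a b)ᶜ = 0 := by
    rw [measure_compl measurableSet_Ioc (by rw [hIoc]; exact ENNReal.ofReal_ne_top),
      huniv, hIoc, tsub_self]
  apply Measure.restrict_eq_self_of_ae_mem
  rw [Filter.Eventually]
  rw [mem_ae_iff]
  exact hcompl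

set_option maxHeartbeats 1000000 in
/-- The key identity: `L` is given by integration against the Stieltjes measure. -/
lemma L_eq_integral (hpos : Hpos L) (hK : IsCompact K) (hloc : Hloc L K)
    (ha : ∀ x ∈ K, a + 1 ≤ x) (hb : ∀ x ∈ K, x + 1 ≤ b) (hab : a + 2 ≤ b)
    (g : C(ℝ, ℝ)) :
    L g = ∫ x, g x ∂(stieltjes L hpos).measure := by
  set μ := (stieltjes L hpos).measure with hμdef
  haveI : IsFiniteMeasure μ := isFiniteMeasure L hpos hloc ha hb
  haveI : IsFiniteMeasureOnCompacts μ := inferInstance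
  have hgOn : ∀ p q : ℝ, IntegrableOn g (Ioc p q) μ := fun p q =>
    (map_continuous g).integrableOn_Ioc
  set M : ℝ := L 1 with hMdef
  have hM : 0 ≤ M := M_nonneg L hpos
  -- a bound for g on [a, b]
  obtain ⟨Cg0, hCg0⟩ := (isCompact_Icc (a := a) (b := b)).exists_bound_of_continuousOn
    (map_continuous g).continuousOn
  set Cg : ℝ := max Cg0 0 with hCgdef
  have hCg : ∀ x ∈ Icc a b, |g x| ≤ Cg := fun x hx =>
    (hCg0 x hx).trans (le_max_left _ _)
  have hCgnn : 0 ≤ Cg := le_max_right _ _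
  -- it suffices to prove an ε-approximation
  suffices h : ∀ ε : ℝ, 0 < ε → |L g - ∫ x, g x ∂μ| ≤ ε * (2 * M + Cg + 1) by
    by_contra hne
    have hd : 0 < |L g - ∫ x, g x ∂μ| := abs_pos.2 (sub_ne_zero.2 hne)
    set D : ℝ := 2 * M + Cg + 1 with hDdef
    have hD : 0 < D := by positivity
    have := h (|L g - ∫ x, g x ∂μ| / (2 * D)) (by positivity)
    have heq : |L g - ∫ x, g x ∂μ| / (2 * D) * D = |L g - ∫ x, g x ∂μ| / 2 := by
      field_simp
    rw [heq] at this
    linarith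
  intro ε hε
  -- uniform continuity of g on [a-1, b+1]
  have hucont := (isCompact_Icc (a := a - 1) (b := b + 1)).uniformContinuousOn_of_continuous
    (map_continuous g).continuousOn
  rw [Metric.uniformContinuousOn_iff] at hucont
  obtain ⟨δu0, hδu0, hu⟩ := hucont ε hε
  set δu : ℝ := min δu0 1 with hδudef
  have hδu : 0 < δu := lt_min hδu0 one_pos
  have hδu1 : δu ≤ 1 := min_le_right _ _
  have hgu : ∀ x y : ℝ, x ∈ Icc (a-1) (b+1) → y ∈ Icc (a-1) (b+1) → |x - y| < δu →
      |g x - g y| ≤ ε := by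
    intro x y hx hy hxy
    have := hu x hx y hy (by rw [Real.dist_eq]; exact hxy.trans_le (min_le_left _ _))
    rw [Real.dist_eq] at this
    exact this.le
  -- the partition
  obtain ⟨n, hn⟩ := exists_nat_ge ((b - a) / (δu / 2))
  have hban : 0 < b - a := by linarith
  have hnpos : 0 < (n:ℝ) := lt_of_lt_of_le (by positivity) hn
  have hn0 : n ≠ 0 := by exact_mod_cast hnpos.ne'
  set m : ℝ := (b - a) / n with hmdef
  have hm0 : 0 < m := by positivity
  have hmesh : m ≤ δu / 2 := by
    rw [hmdef, div_le_iff₀ hnpos]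
    rw [div_le_iff₀ (by positivity : (0:ℝ) < δu/2)] at hn
    linarith [hn]
  set t : ℕ → ℝ := fun i => a + i * m with htdef
  have ht0 : t 0 = a := by simp [htdef]
  have htn : t n = b := by
    simp only [htdef, hmdef]
    field_simp
    ring
  have htmono : ∀ {i j : ℕ}, i ≤ j → t i ≤ t j := by
    intro i j hij
    simp only [htdef]
    have hij' : (i:ℝ) ≤ j := by exact_mod_cast hij
    nlinarith [hm0.le]
  have htsucc : ∀ i : ℕ, t (i+1) = t i + m := by
    intro i; simp only [htdef]; push_cast; ring
  have htmem : ∀ i : ℕ, i ≤ n → t i ∈ Icc a b := by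
    intro i hi
    constructor
    · rw [← ht0]; exact htmono (Nat.zero_le _)
    · rw [← htn]; exact htmono hi
  -- choice of δ
  set ε' : ℝ := ε / (n + 1) with hε'def
  have hε' : 0 < ε' := by positivity
  have hchoice : ∀ i : ℕ, ∃ δ' > 0, L (gcut (t i) δ') < F L (t i) + ε' := fun i =>
    F_approx L hpos (t i) hε'
  choose δi hδi hLi using hchoice
  have hnem : (Finset.range (n+1)).Nonempty := ⟨0, Finset.mem_range.2 (Nat.succ_pos n)⟩
  set δ : ℝ := min (min (δu/2) (1/2)) ((Finset.range (n+1)).inf' hnem δi) with hδdef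
  have hδpos : 0 < δ := by
    apply lt_min (lt_min (by positivity) (by norm_num))
    rw [Finset.lt_inf'_iff]
    intro i _
    exact hδi i
  have hδu2 : δ ≤ δu / 2 := (min_le_left _ _).trans (min_le_left _ _)
  have hδhalf : δ ≤ 1/2 := (min_le_left _ _).trans (min_le_right _ _)
  have hδle : ∀ i : ℕ, i ≤ n → δ ≤ δi i := fun i hi =>
    (min_le_right _ _).trans (Finset.inf'_le _ (Finset.mem_range.2 (Nat.lt_succ_of_le hi)))
  have hGlt : ∀ i : ℕ, i ≤ n → L (gcut (t i) δ) < F L (t i) + ε' := fun i hi =>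
    lt_of_le_of_lt (Lmono L hpos (gcut_mono_δ (t i) hδpos (hδle i hi))) (hLi i)
  have hGge : ∀ i : ℕ, F L (t i) ≤ L (gcut (t i) δ) := fun i => F_le L hpos (t i) hδpos
  -- the pieces
  set Δ : ℕ → C(ℝ,ℝ) := fun i => gcut (t (i+1)) δ - gcut (t i) δ with hΔdef
  have hΔapp : ∀ (i : ℕ) (x : ℝ), Δ i x = gcut (t (i+1)) δ x - gcut (t i) δ x := fun i x => rfl
  have hΔnn : ∀ (i : ℕ) (x : ℝ), 0 ≤ Δ i x := by
    intro i x
    rw [hΔapp]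
    have := gcut_mono_t δ hδpos (htmono (Nat.le_succ i)) x
    linarith
  have hLΔnn : ∀ i : ℕ, 0 ≤ L (Δ i) := fun i => hpos _ (hΔnn i)
  set ΔF : ℕ → ℝ := fun i => F L (t (i+1)) - F L (t i) with hΔFdef
  have hΔFnn : ∀ i : ℕ, 0 ≤ ΔF i := fun i =>
    sub_nonneg.2 (F_mono L hpos (htmono (Nat.le_succ i)))
  have hLΔ : ∀ i : ℕ, L (Δ i) = L (gcut (t (i+1)) δ) - L (gcut (t i) δ) := by
    intro i; rw [hΔdef]; exact map_sub L _ _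
  have hLΔclose : ∀ i : ℕ, i < n → |L (Δ i) - ΔF i| ≤ ε' := by
    intro i hi
    have h1 := hGlt (i+1) hi
    have h2 := hGlt i hi.le
    have h3 := hGge (i+1)
    have h4 := hGge i
    rw [hLΔ, abs_le]
    constructor
    · simp only [hΔFdef]; linarith
    · simp only [hΔFdef]; linarith
  -- telescoping
  have htele : ∑ i ∈ Finset.range n, Δ i = gcut b δ - gcut a δ := by
    calc ∑ i ∈ Finset.range n, Δ i = gcut (t n) δ - gcut (t 0) δ :=
          Finset.sum_range_sub (fun i => gcut (t i) δ) n
      _ = gcut b δ - gcut a δ := by rw [ht0, htn]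
  have hKb : ∀ x ∈ K, gcut b δ x = 1 := fun x hx =>
    gcut_eq_one hδpos (by linarith [hb x hx])
  have hKa : ∀ x ∈ K, gcut a δ x = 0 := fun x hx =>
    gcut_eq_zero hδpos (by linarith [ha x hx])
  have hsumΔK : ∀ x ∈ K, (∑ i ∈ Finset.range n, Δ i) x = 1 := by
    intro x hx
    rw [htele, ContinuousMap.sub_apply, hKb x hx, hKa x hx, sub_zero]
  have hsumLΔ : ∑ i ∈ Finset.range n, L (Δ i) = M := by
    rw [← map_sum]
    exact hloc _ 1 (fun x hx => by rw [hsumΔK x hx, ContinuousMap.one_apply])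
  have hT1 : L g = ∑ i ∈ Finset.range n, L (g * Δ i) := by
    rw [← map_sum, ← Finset.mul_sum]
    exact hloc g _ (fun x hx => by
      rw [ContinuousMap.mul_apply, hsumΔK x hx, mul_one])
  -- support of the pieces
  have hsupp : ∀ i : ℕ, i < n → ∀ x : ℝ, Δ i x ≠ 0 → t i < x ∧ x < t (i+1) + δ := by
    intro i hi x hx
    rcases le_or_gt x (t i) with h1 | h1
    · exact absurd (by
        rw [hΔapp, gcut_eq_one hδpos (h1.trans (htmono (Nat.le_succ i))),
          gcut_eq_one hδpos h1, sub_self]) hx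
    rcases lt_or_ge x (t (i+1) + δ) with h2 | h2
    · exact ⟨h1, h2⟩
    · exact absurd (by
        rw [hΔapp, gcut_eq_zero hδpos h2,
          gcut_eq_zero hδpos (by linarith [htmono (Nat.le_succ i)]), sub_self]) hx
  have hclose : ∀ i : ℕ, i < n → ∀ x : ℝ, Δ i x ≠ 0 → |g x - g (t (i+1))| ≤ ε := by
    intro i hi x hx
    obtain ⟨h1, h2⟩ := hsupp i hi x hx
    have hti : t i ∈ Icc a b := htmem i hi.le
    have hti1 : t (i+1) ∈ Icc a b := htmem (i+1) hi
    have hm' : t (i+1) - t i = m := by rw [htsucc]; ring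
    apply hgu
    · exact ⟨by linarith [hti.1], by linarith [hti1.2]⟩
    · exact ⟨by linarith [hti1.1], by linarith [hti1.2]⟩
    · rw [abs_sub_lt_iff]
      constructor
      · linarith
      · linarith
  have hS2 : ∀ i : ℕ, i < n →
      |L (g * Δ i) - g (t (i+1)) * L (Δ i)| ≤ ε * L (Δ i) := by
    intro i hi
    set c : ℝ := g (t (i+1)) with hcdef
    set q : C(ℝ,ℝ) := g * Δ i - c • Δ i with hqdef
    have hq : ∀ x, q x = (g x - c) * Δ i x := by
      intro x
      simp only [hqdef, ContinuousMap.sub_apply, ContinuousMap.mul_apply,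
        ContinuousMap.smul_apply, smul_eq_mul]
      ring
    have hLq : L q = L (g * Δ i) - c * L (Δ i) := by
      rw [hqdef, map_sub, _root_.map_smul, smul_eq_mul]
    have hqbound : ∀ x, |q x| ≤ ε * Δ i x := by
      intro x
      rw [hq]
      by_cases hΔx : Δ i x = 0
      · rw [hΔx, mul_zero, mul_zero, abs_zero]
      · rw [abs_mul, abs_of_nonneg (hΔnn i x)]
        exact mul_le_mul_of_nonneg_right (hclose i hi x hΔx) (hΔnn i x)
    have hup : L q ≤ ε * L (Δ i) := by
      have := Lmono L hpos (f := q) (g := ε • Δ i) (fun x => by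
        rw [ContinuousMap.smul_apply, smul_eq_mul]
        exact (le_abs_self _).trans (hqbound x))
      rwa [_root_.map_smul, smul_eq_mul] at this
    have hlo : -(ε * L (Δ i)) ≤ L q := by
      have := Lmono L hpos (f := -q) (g := ε • Δ i) (fun x => by
        rw [ContinuousMap.smul_apply, smul_eq_mul, ContinuousMap.neg_apply]
        exact (neg_le_abs _).trans (hqbound x))
      rw [map_neg, _root_.map_smul, smul_eq_mul] at this
      linarith
    rw [← hLq] at *
    exact abs_le.2 ⟨hlo, hup⟩
  -- L-side estimate
  have hLside : |L g - ∑ i ∈ Finset.range n, g (t (i+1)) * ΔF i| ≤ ε * M + Cg * ε := by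
    rw [hT1, ← Finset.sum_sub_distrib]
    refine (Finset.abs_sum_le_sum_abs _ _).trans ?_
    have hterm : ∀ i ∈ Finset.range n,
        |L (g * Δ i) - g (t (i+1)) * ΔF i| ≤ ε * L (Δ i) + Cg * ε' := by
      intro i hi
      rw [Finset.mem_range] at hi
      have h1 := hS2 i hi
      have h2 := hLΔclose i hi
      have h3 : |g (t (i+1))| ≤ Cg := hCg _ (htmem (i+1) hi)
      calc |L (g * Δ i) - g (t (i+1)) * ΔF i|
          ≤ |L (g * Δ i) - g (t (i+1)) * L (Δ i)| +
            |g (t (i+1)) * L (Δ i) - g (t (i+1)) * ΔF i| := abs_sub_le _ _ _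
        _ ≤ ε * L (Δ i) + Cg * ε' := by
            have h4 : |g (t (i+1)) * L (Δ i) - g (t (i+1)) * ΔF i|
                = |g (t (i+1))| * |L (Δ i) - ΔF i| := by
              rw [← abs_mul]; ring_nf
            have h5 : |g (t (i+1))| * |L (Δ i) - ΔF i| ≤ Cg * ε' :=
              mul_le_mul h3 h2 (abs_nonneg _) hCgnn
            linarith [h1]
    refine (Finset.sum_le_sum hterm).trans ?_
    rw [Finset.sum_add_distrib, ← Finset.mul_sum, hsumLΔ, Finset.sum_const,
      Finset.card_range, nsmul_eq_mul]
    have h6 : (n:ℝ) * (Cg * ε') ≤ Cg * ε := by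
      rw [hε'def]
      have h7 : (n:ℝ) * (Cg * (ε / (n + 1))) = Cg * ε * ((n:ℝ)/(n+1)) := by ring
      have h8 : (n:ℝ)/(n+1) ≤ 1 := by
        rw [div_le_one (by positivity)]
        linarith
      rw [h7]
      calc Cg * ε * ((n:ℝ)/(n+1)) ≤ Cg * ε * 1 :=
            mul_le_mul_of_nonneg_left h8 (by positivity)
        _ = Cg * ε := mul_one _
    linarith
  -- Integral-side estimate
  have hFa : F L a = 0 := F_eq_zero L hpos hloc (fun x hx => ha x hx)
  have hFb : F L b = M := F_eq_M L hpos hloc (fun x hx => by linarith [hb x hx])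
  have hΔFsum : ∑ i ∈ Finset.range n, ΔF i = M := by
    have := Finset.sum_range_sub (fun i => F L (t i)) n
    simp only [hΔFdef]
    rw [this, ht0, htn, hFa, hFb, sub_zero]
  have hμIoc : ∀ i : ℕ, μ (Ioc (t i) (t (i+1))) = ENNReal.ofReal (ΔF i) := by
    intro i
    rw [hμdef, StieltjesFunction.measure_Ioc]
    rfl
  have htoReal : ∀ i : ℕ, (μ (Ioc (t i) (t (i+1)))).toReal = ΔF i := by
    intro i
    rw [hμIoc i, ENNReal.toReal_ofReal (hΔFnn i)]
  have hint : ∀ i : ℕ, i < n →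
      |∫ x in Ioc (t i) (t (i+1)), g x ∂μ - g (t (i+1)) * ΔF i| ≤ ε * ΔF i := by
    intro i hi
    set c : ℝ := g (t (i+1)) with hcdef
    set I : Set ℝ := Ioc (t i) (t (i+1)) with hIdef
    have hgint : IntegrableOn g I μ := hgOn _ _
    have hcint : IntegrableOn (fun _ => c) I μ :=
      integrableOn_const (measure_lt_top μ I).ne
    have heq : ∫ x in I, g x ∂μ - c * ΔF i = ∫ x in I, (g x - c) ∂μ := by
      rw [integral_sub hgint hcint, setIntegral_const, smul_eq_mul]
      show _ = _ - (μ I).toReal * c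
      rw [hIdef, htoReal i]
      ring
    rw [heq]
    have hbound : ∀ x ∈ I, ‖g x - c‖ ≤ ε := by
      intro x hx
      have hti : t i ∈ Icc a b := htmem i hi.le
      have hti1 : t (i+1) ∈ Icc a b := htmem (i+1) hi
      have hm' : t (i+1) - t i = m := by rw [htsucc]; ring
      rw [Real.norm_eq_abs]
      apply hgu
      · exact ⟨by linarith [hti.1, hx.1], by linarith [hti1.2, hx.2]⟩
      · exact ⟨by linarith [hti1.1], by linarith [hti1.2]⟩
      · rw [abs_sub_lt_iff]
        constructor
        · linarith [hx.2]
        · linarith [hx.1]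
    have := norm_setIntegral_le_of_norm_le_const (measure_lt_top μ I) hbound
    rw [Real.norm_eq_abs] at this
    calc |∫ x in I, (g x - c) ∂μ| ≤ ε * (μ I).toReal := this
      _ = ε * ΔF i := by rw [hIdef, htoReal i]
  have hsplit : ∫ x, g x ∂μ = ∑ i ∈ Finset.range n, ∫ x in Ioc (t i) (t (i+1)), g x ∂μ := by
    have hres : μ.restrict (Ioc a b) = μ := restrict_Ioc L hpos hloc ha hb
    have key : ∀ mi : ℕ, mi ≤ n →
        ∫ x in Ioc (t 0) (t mi), g x ∂μ
          = ∑ i ∈ Finset.range mi, ∫ x in Ioc (t i) (t (i+1)), g x ∂μ := by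
      intro mi hmi
      induction mi with
      | zero => simp
      | succ k ih =>
        rw [Finset.sum_range_succ, ← ih (Nat.le_of_succ_le hmi),
          ← MeasureTheory.setIntegral_union (Set.Ioc_disjoint_Ioc_of_le le_rfl) measurableSet_Ioc
            (hgOn _ _) (hgOn _ _),
          Set.Ioc_union_Ioc_eq_Ioc (htmono (Nat.zero_le k)) (htmono (Nat.le_succ k))]
    have := key n le_rfl
    rw [ht0, htn] at this
    rw [← this]
    conv_lhs => rw [← hres]
  have hIside : |∫ x, g x ∂μ - ∑ i ∈ Finset.range n, g (t (i+1)) * ΔF i| ≤ ε * M := by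
    rw [hsplit, ← Finset.sum_sub_distrib]
    refine (Finset.abs_sum_le_sum_abs _ _).trans ?_
    calc ∑ i ∈ Finset.range n, |∫ x in Ioc (t i) (t (i+1)), g x ∂μ - g (t (i+1)) * ΔF i|
        ≤ ∑ i ∈ Finset.range n, ε * ΔF i :=
          Finset.sum_le_sum (fun i hi => hint i (Finset.mem_range.1 hi))
      _ = ε * M := by rw [← Finset.mul_sum, hΔFsum]
  calc |L g - ∫ x, g x ∂μ|
      ≤ |L g - ∑ i ∈ Finset.range n, g (t (i+1)) * ΔF i| +
        |∑ i ∈ Finset.range n, g (t (i+1)) * ΔF i - ∫ x, g x ∂μ| := abs_sub_le _ _ _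
    _ ≤ (ε * M + Cg * ε) + ε * M := by
        rw [abs_sub_comm (∑ i ∈ Finset.range n, g (t (i+1)) * ΔF i)]
        linarith [hLside, hIside]
    _ ≤ ε * (2 * M + Cg + 1) := by nlinarith [hε.le]

/-- Riesz–Markov–Kakutani representation for a positive local functional. -/
theorem rmk (hpos : Hpos L) (hK : IsCompact K) (hloc : Hloc L K) :
    ∃ μ : Measure ℝ, μ Kᶜ = 0 ∧ μ univ = ENNReal.ofReal (L 1) ∧
      ∀ g : C(ℝ, ℝ), L g = ∫ x, g x ∂μ := by
  obtain ⟨r, hr⟩ := hK.isBounded.subset_closedBall 0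
  set a : ℝ := -(|r| + 1) with ha_def
  set b : ℝ := |r| + 1 with hb_def
  have habs : ∀ x ∈ K, |x| ≤ |r| := by
    intro x hx
    have h1 := hr hx
    rw [Metric.mem_closedBall, Real.dist_eq, sub_zero] at h1
    exact h1.trans (le_abs_self r)
  have ha : ∀ x ∈ K, a + 1 ≤ x := by
    intro x hx
    have := (abs_le.1 (habs x hx)).1
    simp only [ha_def]
    linarith
  have hb : ∀ x ∈ K, x + 1 ≤ b := by
    intro x hx
    have := (abs_le.1 (habs x hx)).2
    simp only [hb_def]
    linarith
  have hab : a + 2 ≤ b := by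
    have := abs_nonneg r
    simp only [ha_def, hb_def]
    linarith
  exact ⟨(stieltjes L hpos).measure, measure_compl_K L hpos hK hloc,
    measure_univ_eq L hpos hloc ha hb, fun g => L_eq_integral L hpos hK hloc ha hb hab g⟩

end Main

section Operator

open scoped ComplexInnerProductSpace

variable {H : Type*} [NormedAddCommGroup H] [InnerProductSpace ℂ H] [CompleteSpace H]
  (T : H →L[ℂ] H) (hT : IsSelfAdjoint T) (φ : H)

/-- A real-valued continuous function on the spectrum, seen as complex-valued. -/
def cplx (u : C(spectrum ℂ T, ℝ)) : C(spectrum ℂ T, ℂ) :=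
  ⟨fun x => (u x : ℂ), by fun_prop⟩

@[simp] lemma cplx_apply (u : C(spectrum ℂ T, ℝ)) (x : spectrum ℂ T) :
    cplx T u x = (u x : ℂ) := rfl

lemma cplx_star (u : C(spectrum ℂ T, ℝ)) : star (cplx T u) = cplx T u := by
  ext x
  simp [ContinuousMap.star_apply, Complex.conj_ofReal]

lemma cplx_add (u v : C(spectrum ℂ T, ℝ)) : cplx T (u + v) = cplx T u + cplx T v := by
  ext x; push_cast; simp

lemma cplx_smul (r : ℝ) (u : C(spectrum ℂ T, ℝ)) :
    cplx T (r • u) = (r : ℂ) • cplx T u := by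
  ext x; push_cast; simp

lemma cplx_one : cplx T (1 : C(spectrum ℂ T, ℝ)) = 1 := by
  ext x; simp

lemma cplx_mul (u v : C(spectrum ℂ T, ℝ)) : cplx T (u * v) = cplx T u * cplx T v := by
  ext x; push_cast; simp

lemma cfcHom_cplx_selfAdjoint (u : C(spectrum ℂ T, ℝ)) :
    IsSelfAdjoint (cfcHom (A := H →L[ℂ] H) hT.isStarNormal (cplx T u)) := by
  rw [IsSelfAdjoint, ← map_star, cplx_star]

lemma inner_cfcHom_cplx_real (u : C(spectrum ℂ T, ℝ)) :
    ⟪φ, cfcHom (A := H →L[ℂ] H) hT.isStarNormal (cplx T u) φ⟫ =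
      ((⟪φ, cfcHom (A := H →L[ℂ] H) hT.isStarNormal (cplx T u) φ⟫ : ℂ).re : ℂ) := by
  set A := cfcHom (A := H →L[ℂ] H) hT.isStarNormal (cplx T u) with hA
  have hsa : IsSelfAdjoint A := cfcHom_cplx_selfAdjoint T hT u
  have hadj : ContinuousLinearMap.adjoint A = A := by
    rw [← ContinuousLinearMap.star_eq_adjoint, hsa.star_eq]
  have h1 : ⟪φ, A φ⟫ = ⟪A φ, φ⟫ := by
    rw [← ContinuousLinearMap.adjoint_inner_left A φ φ, hadj]
  have h2 : (starRingEnd ℂ) ⟪φ, A φ⟫ = ⟪φ, A φ⟫ := by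
    rw [inner_conj_symm]
    exact h1.symm
  have him : (⟪φ, A φ⟫ : ℂ).im = 0 := Complex.conj_eq_iff_im.1 h2
  exact Complex.ext (by simp) (by simp [him])

/-- The positive linear functional `u ↦ re ⟪φ, u(T) φ⟫` on real functions on the spectrum. -/
def Λr : C(spectrum ℂ T, ℝ) →ₗ[ℝ] ℝ where
  toFun u := (⟪φ, cfcHom (A := H →L[ℂ] H) hT.isStarNormal (cplx T u) φ⟫ : ℂ).re
  map_add' u v := by
    rw [cplx_add, map_add, ContinuousLinearMap.add_apply, inner_add_right, Complex.add_re]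
  map_smul' r u := by
    rw [cplx_smul, _root_.map_smul, ContinuousLinearMap.smul_apply, inner_smul_right]
    simp [Complex.mul_re]

lemma Λr_inner (u : C(spectrum ℂ T, ℝ)) :
    ⟪φ, cfcHom (A := H →L[ℂ] H) hT.isStarNormal (cplx T u) φ⟫ = ((Λr T hT φ u : ℝ) : ℂ) :=
  inner_cfcHom_cplx_real T hT φ u

lemma Λr_pos (u : C(spectrum ℂ T, ℝ)) (hu : ∀ x, 0 ≤ u x) : 0 ≤ Λr T hT φ u := by
  set s : C(spectrum ℂ T, ℝ) := ⟨fun x => Real.sqrt (u x), by fun_prop⟩ with hs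
  have hss : s * s = u := by
    ext x
    exact Real.mul_self_sqrt (hu x)
  set A := cfcHom (A := H →L[ℂ] H) hT.isStarNormal (cplx T s) with hA
  have hsa : IsSelfAdjoint A := cfcHom_cplx_selfAdjoint T hT s
  have hmul : cfcHom (A := H →L[ℂ] H) hT.isStarNormal (cplx T u) = A * A := by
    rw [← hss, cplx_mul, map_mul]
  show 0 ≤ (⟪φ, cfcHom (A := H →L[ℂ] H) hT.isStarNormal (cplx T u) φ⟫ : ℂ).re
  rw [hmul]
  have hadj : ContinuousLinearMap.adjoint A = A := by
    rw [← ContinuousLinearMap.star_eq_adjoint, hsa.star_eq]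
  have heq2 : ⟪φ, (A * A) φ⟫ = ⟪A φ, A φ⟫ := by
    rw [ContinuousLinearMap.mul_apply, ← ContinuousLinearMap.adjoint_inner_left A (A φ) φ, hadj]
  rw [heq2]
  simpa using inner_self_nonneg (𝕜 := ℂ) (x := A φ)

lemma Λr_one : Λr T hT φ 1 = ‖φ‖ ^ 2 := by
  show (⟪φ, cfcHom (A := H →L[ℂ] H) hT.isStarNormal (cplx T 1) φ⟫ : ℂ).re = ‖φ‖ ^ 2
  rw [cplx_one, map_one, ContinuousLinearMap.one_apply, inner_self_eq_norm_sq_to_K]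
  norm_cast

end Operator

end SpectralMeasureAux


open scoped ComplexInnerProductSpace

open SpectralMeasureAux in
/-- Riesz-representation step: for a bounded self-adjoint operator `T` and a
vector `φ`, there is a positive Borel measure `μ_φ` on `σ(T)` of total mass
`‖φ‖²` such that `⟨φ, f(T)φ⟩ = ∫ f dμ_φ` for every continuous `f` on the
spectrum, where `f(T)` is given by the continuous functional calculus. -/
theorem exists_spectral_measure_of_selfAdjoint
    {H : Type*} [NormedAddCommGroup H] [InnerProductSpace ℂ H] [CompleteSpace H]
    (T : H →L[ℂ] H) (hT : IsSelfAdjoint T) (φ : H) :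
    ∃ μ : Measure (spectrum ℂ T),
      μ Set.univ = ENNReal.ofReal (‖φ‖ ^ 2) ∧
      ∀ f : C(spectrum ℂ T, ℂ),
        ⟪φ, cfcHom (A := H →L[ℂ] H) hT.isStarNormal f φ⟫ = ∫ x, f x ∂μ := by
  classical
  set p : C(spectrum ℂ T, ℝ) := ⟨fun z => (z : ℂ).re, by fun_prop⟩ with hp
  have hpapp : ∀ z : spectrum ℂ T, p z = (z : ℂ).re := fun z => rfl
  set pull : C(ℝ, ℝ) →ₗ[ℝ] C(spectrum ℂ T, ℝ) :=
    { toFun := fun f => f.comp p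
      map_add' := fun f g => by ext x; simp
      map_smul' := fun r f => by ext x; simp } with hpull
  set L : C(ℝ, ℝ) →ₗ[ℝ] ℝ := (Λr T hT φ).comp pull with hLdef
  have hLapp : ∀ f : C(ℝ, ℝ), L f = Λr T hT φ (f.comp p) := fun f => rfl
  have hpos : Hpos L := fun f hf => Λr_pos T hT φ _ (fun x => hf _)
  set Kr : Set ℝ := Set.range p with hKr
  have hKrc : IsCompact Kr := isCompact_range (map_continuous p)
  have hloc : Hloc L Kr := by
    intro f g h
    rw [hLapp, hLapp]
    congr 1
    ext x
    exact h (p x) ⟨x, rfl⟩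
  obtain ⟨μ₀, hμ₀K, hμ₀univ, hμ₀int⟩ := rmk L hpos hKrc hloc
  have hL1 : L 1 = ‖φ‖ ^ 2 := by
    rw [hLapp]
    have h1 : (1 : C(ℝ, ℝ)).comp p = 1 := by ext x; simp
    rw [h1, Λr_one]
  -- `p` is a measurable embedding
  have hinj : Function.Injective p := by
    intro z w h
    have hz := hT.mem_spectrum_eq_re z.2
    have hw := hT.mem_spectrum_eq_re w.2
    apply Subtype.ext
    rw [hz, hw]
    exact congrArg Complex.ofReal h
  have hclemb : Topology.IsClosedEmbedding p := (map_continuous p).isClosedEmbedding hinj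
  have hrange : MeasurableSet (Set.range p) := hclemb.isClosed_range.measurableSet
  have hme : MeasurableEmbedding p := hclemb.toIsEmbedding.measurableEmbedding hrange
  set μ : Measure (spectrum ℂ T) := μ₀.comap p with hμdef
  have hmap : μ.map p = μ₀ := by
    rw [hμdef, hme.map_comap]
    apply Measure.restrict_eq_self_of_ae_mem
    rw [Filter.Eventually, mem_ae_iff]
    exact hμ₀K
  have hμuniv : μ Set.univ = ENNReal.ofReal (‖φ‖ ^ 2) := by
    rw [hμdef, hme.comap_apply, Set.image_univ]
    have h2 : μ₀ (Set.range p) = μ₀ Set.univ := by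
      have h3 := measure_add_measure_compl (μ := μ₀) hrange
      rw [show (Set.range ⇑p)ᶜ = Krᶜ from rfl, hμ₀K, add_zero] at h3
      exact h3
    rw [h2, hμ₀univ, hL1]
  haveI : IsFiniteMeasure μ := ⟨by rw [hμuniv]; exact ENNReal.ofReal_lt_top⟩
  have hkey : ∀ w : C(spectrum ℂ T, ℝ), Λr T hT φ w = ∫ x, w x ∂μ := by
    intro w
    obtain ⟨w', hw'⟩ := w.exists_extension hclemb
    have hcomp : w'.comp p = w := by rw [← hw']; rfl
    have h1 : L w' = Λr T hT φ w := by rw [hLapp, hcomp]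
    have h2 : ∫ x, w' x ∂μ₀ = ∫ x, w' (p x) ∂μ := by
      rw [← hmap, hme.integral_map]
    have h3 : ∀ x : spectrum ℂ T, w' (p x) = w x := fun x => by
      rw [← hcomp]; rfl
    rw [← h1, hμ₀int w', h2]
    exact integral_congr_ae (Filter.Eventually.of_forall h3)
  refine ⟨μ, hμuniv, fun f => ?_⟩
  set u : C(spectrum ℂ T, ℝ) := ⟨fun x => (f x).re, by fun_prop⟩ with hu
  set v : C(spectrum ℂ T, ℝ) := ⟨fun x => (f x).im, by fun_prop⟩ with hv
  have hf : f = cplx T u + Complex.I • cplx T v := by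
    ext x
    simp only [ContinuousMap.add_apply, cplx_apply, ContinuousMap.smul_apply, smul_eq_mul]
    show f x = ((f x).re : ℂ) + Complex.I * ((f x).im : ℂ)
    rw [mul_comm, Complex.re_add_im]
  have hui : Integrable (fun x : spectrum ℂ T => ((u x : ℝ) : ℂ)) μ :=
    (Complex.continuous_ofReal.comp (map_continuous u)).integrable_of_hasCompactSupport
      (HasCompactSupport.of_compactSpace _)
  have hvi : Integrable (fun x : spectrum ℂ T => Complex.I * ((v x : ℝ) : ℂ)) μ :=
    (continuous_const.mul (Complex.continuous_ofReal.comp (map_continuous v))).integrable_of_hasCompactSupport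
      (HasCompactSupport.of_compactSpace _)
  have hRHS : ∫ x, f x ∂μ
      = ((∫ x, u x ∂μ : ℝ) : ℂ) + Complex.I * ((∫ x, v x ∂μ : ℝ) : ℂ) := by
    have h4 : ∀ x : spectrum ℂ T, f x = ((u x : ℝ) : ℂ) + Complex.I * ((v x : ℝ) : ℂ) := by
      intro x
      rw [hf]
      simp only [ContinuousMap.add_apply, cplx_apply, ContinuousMap.smul_apply, smul_eq_mul]
    rw [integral_congr_ae (Filter.Eventually.of_forall h4), integral_add hui hvi,
      integral_const_mul]
    congr 1
    · exact integral_ofReal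
    · congr 1
      exact integral_ofReal
  have h5 : cfcHom (A := H →L[ℂ] H) hT.isStarNormal (Complex.I • cplx T v)
      = Complex.I • cfcHom (A := H →L[ℂ] H) hT.isStarNormal (cplx T v) := by
    exact _root_.map_smul _ _ _
  rw [hf, map_add, h5, ContinuousLinearMap.add_apply, ContinuousLinearMap.smul_apply,
    inner_add_right, inner_smul_right,
    Λr_inner T hT φ u, Λr_inner T hT φ v, hkey u, hkey v, ← hf, hRHS]

end SpectralMeasureAux
end

section
/- Let T ≠ 0 be a bounded linear operator on a complex Hilbert space H and let φ ∈ H be such that the series Σ_{k=0}^∞ c_k T^k φ converges in H for every {c_k}_{k=0}^∞ ∈ ℓ²(ℕ₀), and let U : ℓ²(ℕ₀) → H, U({c_k}) = Σ_{k=0}^∞ c_k T^k φ, be the associated (bounded) synthesis operator. Then {T^k φ}_{k=0}^∞ is a frame sequence for H if and only if the spectrum of the restriction of U*U to N(U)^⊥ (the orthogonal complement of the kernel of U, which is invariant under U*U) is contained in the half-open interval (0, ‖U‖²]. In this case σ(U*U) ⊆ [0, ‖U‖²]. -/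
set_option maxHeartbeats 2000000

open scoped ComplexInnerProductSpace
open ContinuousLinearMap

private lemma aux_ineq {C a b : ℝ} (hC : 0 < C) (hb : a ^ 2 ≤ C * (a * b)) (ha : 0 ≤ a)
    (hbnn : 0 ≤ b) : (C ^ 2)⁻¹ * a ^ 2 ≤ b ^ 2 := by
  rcases eq_or_lt_of_le ha with h0 | h0
  · rw [← h0]; simpa using sq_nonneg b
  · have h5 : a ≤ C * b := by
      have h7 : a * a ≤ (C * b) * a := by nlinarith
      exact le_of_mul_le_mul_right h7 h0
    rw [inv_mul_le_iff₀ (by positivity)]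
    nlinarith

private lemma aux_isUnit_of_coercive {E : Type*} [NormedAddCommGroup E] [InnerProductSpace ℂ E]
    [CompleteSpace E] (S : E →L[ℂ] E) {c : ℝ} (hc : 0 < c)
    (h : ∀ x : E, c * ‖x‖ ^ 2 ≤ (⟪x, S x⟫ : ℂ).re) : IsUnit S := by
  have hbd : ∀ x : E, c * ‖x‖ ≤ ‖S x‖ := by
    intro x
    rcases eq_or_ne x 0 with rfl | hx
    · simp
    have h1 : c * ‖x‖ ^ 2 ≤ ‖x‖ * ‖S x‖ := by
      refine (h x).trans ((Complex.re_le_norm _).trans ?_)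
      simpa using norm_inner_le_norm (𝕜 := ℂ) x (S x)
    have hxpos : 0 < ‖x‖ := norm_pos_iff.mpr hx
    nlinarith
  have hanti : AntilipschitzWith (⟨c, hc.le⟩ : NNReal)⁻¹ S := by
    refine S.antilipschitz_of_bound fun x => ?_
    have hco : (((⟨c, hc.le⟩ : NNReal)⁻¹ : NNReal) : ℝ) = c⁻¹ := NNReal.coe_inv _
    rw [hco]
    calc ‖x‖ = c⁻¹ * (c * ‖x‖) := by field_simp
    _ ≤ c⁻¹ * ‖S x‖ := mul_le_mul_of_nonneg_left (hbd x) (inv_nonneg.mpr hc.le)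
  have hinj : Function.Injective S := hanti.injective
  have hclosed : IsClosed (Set.range S) := hanti.isClosed_range S.uniformContinuous
  have horth : (LinearMap.range (S : E →ₗ[ℂ] E))ᗮ = ⊥ := by
    rw [Submodule.eq_bot_iff]
    intro y hy
    have h0 : (⟪S y, y⟫ : ℂ) = 0 :=
      (Submodule.mem_orthogonal _ y).mp hy (S y) (LinearMap.mem_range_self _ y)
    have h0' : (⟪y, S y⟫ : ℂ) = 0 := by
      rw [← inner_conj_symm, h0, map_zero]
    have := h y
    rw [h0'] at this
    simp only [Complex.zero_re] at this
    have : ‖y‖ ^ 2 ≤ 0 := by nlinarith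
    have : ‖y‖ = 0 := by nlinarith [norm_nonneg y, sq_nonneg ‖y‖]
    exact norm_eq_zero.mp this
  have hcl : IsClosed ((LinearMap.range (S : E →ₗ[ℂ] E) : Submodule ℂ E) : Set E) := by
    simpa [LinearMap.coe_range] using hclosed
  haveI : CompleteSpace (LinearMap.range (S : E →ₗ[ℂ] E) : Submodule ℂ E) := hcl.completeSpace_coe
  have hrange : LinearMap.range (S : E →ₗ[ℂ] E) = ⊤ := Submodule.orthogonal_eq_bot_iff.mp horth
  rw [ContinuousLinearMap.isUnit_iff_bijective]
  exact ⟨hinj, LinearMap.range_eq_top.mp hrange⟩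

private lemma aux_spectrum_sub {E : Type*} [NormedAddCommGroup E] [InnerProductSpace ℂ E]
    [CompleteSpace E] [Nontrivial E] (S : E →L[ℂ] E) (hS : IsSelfAdjoint S)
    {s : ℝ} (hs : 0 ≤ s) (hq : ∀ x : E, s * ‖x‖ ^ 2 ≤ (⟪x, S x⟫ : ℂ).re)
    {B : ℝ} (hnorm : ‖S‖ ≤ B) {z : ℂ} (hz : z ∈ spectrum ℂ S) :
    z = Complex.ofReal z.re ∧ s ≤ z.re ∧ z.re ≤ B := by
  have hre : z = (z.re : ℂ) := hS.mem_spectrum_eq_re hz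
  refine ⟨hre, ?_, ?_⟩
  · by_contra hlt
    push_neg at hlt
    set t := z.re with ht
    have hcoer : ∀ x : E, (s - t) * ‖x‖ ^ 2 ≤ (⟪x, (S - (t : ℂ) • 1) x⟫ : ℂ).re := by
      intro x
      have h1 : (⟪x, (S - (t : ℂ) • 1) x⟫ : ℂ) = ⟪x, S x⟫ - (t : ℂ) * ⟪x, x⟫ := by
        simp only [ContinuousLinearMap.sub_apply, ContinuousLinearMap.smul_apply,
          ContinuousLinearMap.one_apply, inner_sub_right, inner_smul_right]
      rw [h1]
      have h2 : ((t : ℂ) * ⟪x, x⟫).re = t * ‖x‖ ^ 2 := by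
        rw [inner_self_eq_norm_sq_to_K (𝕜 := ℂ) x]
        simp [Complex.mul_re, RCLike.ofReal_re, RCLike.ofReal_im]
        left
        norm_cast
      rw [Complex.sub_re, h2]
      have := hq x
      nlinarith [sq_nonneg ‖x‖]
    have hunit : IsUnit (S - (t : ℂ) • 1) :=
      aux_isUnit_of_coercive _ (by linarith) hcoer
    have hneg : IsUnit ((t : ℂ) • (1 : E →L[ℂ] E) - S) := by
      have := hunit.neg
      rwa [neg_sub] at this
    rw [hre] at hz
    exact spectrum.notMem_iff.mpr
      (by simpa [Algebra.algebraMap_eq_smul_one] using hneg) hz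
  · have h1 : ‖z‖ ≤ ‖S‖ := spectrum.norm_le_norm_of_mem hz
    have h2 : z.re ≤ ‖z‖ := Complex.re_le_norm z
    linarith

private lemma aux_spectrum_empty {E : Type*} [NormedAddCommGroup E] [InnerProductSpace ℂ E]
    [Subsingleton E] (S : E →L[ℂ] E) : spectrum ℂ S = ∅ := by
  ext z
  simp only [Set.mem_empty_iff_false, iff_false]
  intro hz
  exact spectrum.notMem_iff.mpr (isUnit_of_subsingleton _) hz

noncomputable instance : Nontrivial (lp (fun _ : ℕ => ℂ) 2) := by
  refine ⟨lp.single 2 0 1, 0, fun h => ?_⟩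
  have h1 : (lp.single 2 (0:ℕ) (1:ℂ) : ∀ _ : ℕ, ℂ) 0 = 1 := lp.single_apply_self 2 0 1
  rw [h] at h1
  simp at h1

/-- Characterization of the frame-sequence property of the orbit
`{T^k φ}_{k=0}^∞` in terms of the spectrum of `U*U` restricted to the
orthogonal complement of the kernel of the synthesis operator `U`. -/
theorem orbit_frameSequence_iff_spectrum_restriction
    {H : Type*} [NormedAddCommGroup H] [InnerProductSpace ℂ H] [CompleteSpace H]
    (T : H →L[ℂ] H) (hT : T ≠ 0) (φ : H)
    (hconv : ∀ c : lp (fun _ : ℕ => ℂ) 2, Summable fun k : ℕ => c k • (T ^ k) φ)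
    (U : lp (fun _ : ℕ => ℂ) 2 →L[ℂ] H)
    (hU : ∀ c : lp (fun _ : ℕ => ℂ) 2, U c = ∑' k : ℕ, c k • (T ^ k) φ)
    (R : ((LinearMap.ker (U : lp (fun _ : ℕ => ℂ) 2 →ₗ[ℂ] H))ᗮ : Submodule ℂ (lp (fun _ : ℕ => ℂ) 2)) →L[ℂ]
         ((LinearMap.ker (U : lp (fun _ : ℕ => ℂ) 2 →ₗ[ℂ] H))ᗮ : Submodule ℂ (lp (fun _ : ℕ => ℂ) 2)))
    (hR : ∀ x : ((LinearMap.ker (U : lp (fun _ : ℕ => ℂ) 2 →ₗ[ℂ] H))ᗮ : Submodule ℂ (lp (fun _ : ℕ => ℂ) 2)),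
      (R x : lp (fun _ : ℕ => ℂ) 2) = (ContinuousLinearMap.adjoint U) (U x)) :
    ((∃ A B : ℝ, 0 < A ∧ 0 < B ∧
        ∀ f ∈ closure ((Submodule.span ℂ (Set.range fun k : ℕ => (T ^ k) φ) : Submodule ℂ H) : Set H),
          A * ‖f‖ ^ 2 ≤ ∑' k : ℕ, ‖⟪f, (T ^ k) φ⟫‖ ^ 2 ∧
          ∑' k : ℕ, ‖⟪f, (T ^ k) φ⟫‖ ^ 2 ≤ B * ‖f‖ ^ 2) ↔
      spectrum ℂ R ⊆ Complex.ofReal '' Set.Ioc 0 (‖U‖ ^ 2)) ∧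
    (spectrum ℂ R ⊆ Complex.ofReal '' Set.Ioc 0 (‖U‖ ^ 2) →
      spectrum ℂ ((ContinuousLinearMap.adjoint U).comp U) ⊆
        Complex.ofReal '' Set.Icc 0 (‖U‖ ^ 2)) := by
  set Ua := ContinuousLinearMap.adjoint U with hUa
  -- U applied to basis vectors
  have hUe : ∀ k : ℕ, U (lp.single 2 k 1) = (T ^ k) φ := by
    intro k
    rw [hU]
    rw [tsum_eq_single k]
    · rw [lp.single_apply_self]; simp
    · intro j hj
      rw [lp.single_apply_ne 2 k 1 hj]; simp
  -- adjoint applied pointwise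
  have hUaApp : ∀ (f : H) (k : ℕ), Ua f k = ⟪(T ^ k) φ, f⟫ := by
    intro f k
    have h1 : (⟪lp.single 2 k (1:ℂ), Ua f⟫ : ℂ) = Ua f k := by
      rw [lp.inner_single_left]
      simp [RCLike.inner_apply]
    rw [← h1, hUa, ContinuousLinearMap.adjoint_inner_right, hUe]
  -- sum identity
  have hsum : ∀ f : H, (∑' k : ℕ, ‖⟪f, (T ^ k) φ⟫‖ ^ 2) = ‖Ua f‖ ^ 2 := by
    intro f
    have h2 : ((2 : ENNReal)).toReal = 2 := by norm_num
    have hth := lp.norm_rpow_eq_tsum (p := 2) (by norm_num) (Ua f)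
    rw [h2] at hth
    have h3 : ∀ k : ℕ, ‖Ua f k‖ = ‖⟪f, (T ^ k) φ⟫‖ := by
      intro k; rw [hUaApp f k, norm_inner_symm]
    have hp : ∀ x : ℝ, x ^ (2:ℝ) = x ^ 2 := fun x => by
      rw [show ((2:ℝ)) = ((2:ℕ):ℝ) by norm_num, Real.rpow_natCast]
    simp_rw [hp] at hth
    rw [hth]
    exact tsum_congr fun k => by rw [h3 k]
  -- closure of span of orbit = closure of range of U
  have hMeq : closure ((Submodule.span ℂ (Set.range fun k : ℕ => (T ^ k) φ) : Submodule ℂ H) : Set H)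
      = closure (Set.range U) := by
    apply subset_antisymm
    · apply closure_mono
      have hsub : Set.range (fun k : ℕ => (T ^ k) φ) ⊆ (LinearMap.range (U : lp (fun _ : ℕ => ℂ) 2 →ₗ[ℂ] H) : Set _) := by
        rintro - ⟨k, rfl⟩
        exact ⟨lp.single 2 k 1, hUe k⟩
      have hspan := Submodule.span_le.mpr hsub
      intro x hx
      exact hspan hx
    · refine closure_minimal ?_ isClosed_closure
      rintro - ⟨c, rfl⟩
      rw [hU c]
      refine mem_closure_of_tendsto (hconv c).hasSum ?_
      filter_upwards with s
      refine Submodule.sum_mem _ fun k _ => Submodule.smul_mem _ _ ?_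
      exact Submodule.subset_span ⟨k, rfl⟩
  haveI : CompleteSpace (LinearMap.ker (U : lp (fun _ : ℕ => ℂ) 2 →ₗ[ℂ] H) : Submodule ℂ (lp (fun _ : ℕ => ℂ) 2)) :=
    (ContinuousLinearMap.isClosed_ker U).completeSpace_coe
  -- (range Ua)ᗮ = ker U and K = closure of range Ua
  have horthUa : (LinearMap.range (Ua : H →ₗ[ℂ] lp (fun _ : ℕ => ℂ) 2))ᗮ = LinearMap.ker (U : lp (fun _ : ℕ => ℂ) 2 →ₗ[ℂ] H) := by
    ext z
    simp only [Submodule.mem_orthogonal, LinearMap.mem_ker, LinearMap.mem_range,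
      ContinuousLinearMap.coe_coe]
    constructor
    · intro hz
      rw [← inner_self_eq_zero (𝕜 := ℂ) (x := U z)]
      have := hz (Ua (U z)) ⟨U z, rfl⟩
      rwa [hUa, ContinuousLinearMap.adjoint_inner_left] at this
    · rintro hz - ⟨f, rfl⟩
      rw [hUa, ContinuousLinearMap.adjoint_inner_left, hz, inner_zero_right]
  have hK : ((LinearMap.ker (U : lp (fun _ : ℕ => ℂ) 2 →ₗ[ℂ] H))ᗮ : Submodule ℂ (lp (fun _ : ℕ => ℂ) 2))
      = (LinearMap.range (Ua : H →ₗ[ℂ] lp (fun _ : ℕ => ℂ) 2)).topologicalClosure := by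
    rw [← horthUa, Submodule.orthogonal_orthogonal_eq_closure]
  -- inner product facts for R
  have hRinner : ∀ x y : ((LinearMap.ker (U : lp (fun _ : ℕ => ℂ) 2 →ₗ[ℂ] H))ᗮ : Submodule ℂ (lp (fun _ : ℕ => ℂ) 2)),
      (⟪R x, y⟫ : ℂ) = ⟪U x, U y⟫ := by
    intro x y
    rw [Submodule.coe_inner, hR x, hUa, ContinuousLinearMap.adjoint_inner_left]
  have hRinner' : ∀ x y : ((LinearMap.ker (U : lp (fun _ : ℕ => ℂ) 2 →ₗ[ℂ] H))ᗮ : Submodule ℂ (lp (fun _ : ℕ => ℂ) 2)),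
      (⟪x, R y⟫ : ℂ) = ⟪U x, U y⟫ := by
    intro x y
    rw [Submodule.coe_inner, hR y, hUa, ContinuousLinearMap.adjoint_inner_right]
  have hRsa : IsSelfAdjoint R := by
    rw [ContinuousLinearMap.isSelfAdjoint_iff_isSymmetric]
    intro x y
    rw [ContinuousLinearMap.coe_coe]
    rw [show (⟪R x, y⟫ : ℂ) = ⟪U x, U y⟫ from hRinner x y, hRinner' x y]
  have hRquad : ∀ x : ((LinearMap.ker (U : lp (fun _ : ℕ => ℂ) 2 →ₗ[ℂ] H))ᗮ : Submodule ℂ (lp (fun _ : ℕ => ℂ) 2)),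
      (⟪x, R x⟫ : ℂ).re = ‖U x‖ ^ 2 := by
    intro x
    rw [hRinner' x x]
    simpa using inner_self_eq_norm_sq (𝕜 := ℂ) (U x)
  have hRnorm : ‖R‖ ≤ ‖U‖ ^ 2 := by
    refine ContinuousLinearMap.opNorm_le_bound R (by positivity) fun x => ?_
    have h1 : ‖R x‖ = ‖(R x : lp (fun _ : ℕ => ℂ) 2)‖ := rfl
    rw [h1, hR x]
    calc ‖ContinuousLinearMap.adjoint U (U x)‖ ≤ ‖ContinuousLinearMap.adjoint U‖ * ‖U x‖ :=
      (ContinuousLinearMap.adjoint U).le_opNorm _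
    _ = ‖U‖ * ‖U x‖ := by rw [LinearIsometryEquiv.norm_map ContinuousLinearMap.adjoint U]
    _ ≤ ‖U‖ * (‖U‖ * ‖x‖) :=
      mul_le_mul_of_nonneg_left (U.le_opNorm _) (norm_nonneg _)
    _ = ‖U‖ ^ 2 * ‖x‖ := by ring
  constructor
  · constructor
    · -- FORWARD: frame sequence ⟹ spectrum condition
      rintro ⟨A, B, hA, hB, hfr⟩
      -- lower bound for Ua on closure of range U
      have hlowM : ∀ f ∈ closure (Set.range U), Real.sqrt A * ‖f‖ ≤ ‖Ua f‖ := by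
        intro f hf
        rw [← hMeq] at hf
        have h1 := (hfr f hf).1
        rw [hsum f] at h1
        have h2 : Real.sqrt (A * ‖f‖ ^ 2) ≤ Real.sqrt (‖Ua f‖ ^ 2) := Real.sqrt_le_sqrt h1
        rwa [Real.sqrt_mul hA.le, Real.sqrt_sq (norm_nonneg f),
          Real.sqrt_sq (norm_nonneg _)] at h2
      have hsA : 0 < Real.sqrt A := Real.sqrt_pos.mpr hA
      -- transfer: U bounded below on (ker U)ᗮ
      have hUlow : ∀ x ∈ (LinearMap.ker (U : lp (fun _ : ℕ => ℂ) 2 →ₗ[ℂ] H))ᗮ, Real.sqrt A * ‖x‖ ≤ ‖U x‖ := by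
        set s := Real.sqrt A with hsdef
        set Msub : Submodule ℂ H := (LinearMap.range (U : lp (fun _ : ℕ => ℂ) 2 →ₗ[ℂ] H)).topologicalClosure with hMsub
        have hMsubCoe : (Msub : Set H) = closure (Set.range U) := by
          rw [hMsub, Submodule.topologicalClosure_coe, LinearMap.coe_range, ContinuousLinearMap.coe_coe]
        have hMclosed : IsClosed (Msub : Set H) := Submodule.isClosed_topologicalClosure _
        haveI : CompleteSpace Msub := hMclosed.completeSpace_coe
        have hlow' : ∀ m : Msub, s * ‖(m : H)‖ ≤ ‖Ua (m : H)‖ := by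
          intro m
          exact hlowM (m : H) (by rw [← hMsubCoe]; exact m.2)
        set g : Msub →L[ℂ] lp (fun _ : ℕ => ℂ) 2 := Ua.comp Msub.subtypeL with hg
        have hanti : AntilipschitzWith (⟨s, hsA.le⟩ : NNReal)⁻¹ g := by
          refine g.antilipschitz_of_bound fun m => ?_
          have hco : (((⟨s, hsA.le⟩ : NNReal)⁻¹ : NNReal) : ℝ) = s⁻¹ := NNReal.coe_inv _
          rw [hco]
          have h1 := hlow' m
          have h2 : ‖g m‖ = ‖Ua (m : H)‖ := rfl
          have h3 : ‖m‖ = ‖(m : H)‖ := rfl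
          rw [h2, h3]
          calc ‖(m : H)‖ = s⁻¹ * (s * ‖(m : H)‖) := by field_simp
          _ ≤ s⁻¹ * ‖Ua (m : H)‖ := mul_le_mul_of_nonneg_left h1 (inv_nonneg.mpr hsA.le)
        have hclosed : IsClosed (Set.range g) := hanti.isClosed_range g.uniformContinuous
        have hrg : Set.range g = Ua '' (Msub : Set H) := by
          ext y
          constructor
          · rintro ⟨m, rfl⟩; exact ⟨(m : H), m.2, rfl⟩
          · rintro ⟨v, hv, rfl⟩; exact ⟨⟨v, hv⟩, rfl⟩
        rw [hrg] at hclosed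
        have hsub : Set.range Ua ⊆ Ua '' (Msub : Set H) := by
          rintro - ⟨f, rfl⟩
          obtain ⟨m, hm, w, hw, rfl⟩ := Msub.exists_add_mem_mem_orthogonal f
          have hUaw : Ua w = 0 := by
            rw [← inner_self_eq_zero (𝕜 := ℂ) (x := Ua w), hUa,
              ContinuousLinearMap.adjoint_inner_left]
            exact (Submodule.mem_orthogonal' Msub w).mp hw _
              (Submodule.le_topologicalClosure _ ⟨adjoint U w, rfl⟩)
          exact ⟨m, hm, by rw [map_add, hUaw, add_zero]⟩
        have hKsub : (((LinearMap.ker (U : lp (fun _ : ℕ => ℂ) 2 →ₗ[ℂ] H))ᗮ : Submodule ℂ (lp (fun _ : ℕ => ℂ) 2)) :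
            Set (lp (fun _ : ℕ => ℂ) 2)) ⊆ Ua '' (Msub : Set H) := by
          rw [hK]
          rw [Submodule.topologicalClosure_coe, LinearMap.coe_range]
          exact closure_minimal hsub hclosed
        intro x hx
        obtain ⟨f, hf, hfx⟩ := hKsub hx
        have hfbound : ‖f‖ ≤ s⁻¹ * ‖x‖ := by
          have h1 := hlowM f (by rw [← hMsubCoe]; exact hf)
          rw [hfx] at h1
          calc ‖f‖ = s⁻¹ * (s * ‖f‖) := by field_simp
          _ ≤ s⁻¹ * ‖x‖ := mul_le_mul_of_nonneg_left h1 (inv_nonneg.mpr hsA.le)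
        have hxx : ‖x‖ ^ 2 ≤ ‖U x‖ * (s⁻¹ * ‖x‖) := by
          have h1 : (‖x‖ : ℝ) ^ 2 = (⟪x, Ua f⟫ : ℂ).re := by
            rw [hfx]; simpa using (inner_self_eq_norm_sq (𝕜 := ℂ) x).symm
          have h2 : (⟪x, Ua f⟫ : ℂ).re ≤ ‖U x‖ * ‖f‖ := by
            rw [hUa, ContinuousLinearMap.adjoint_inner_right]
            refine (Complex.re_le_norm _).trans ?_
            simpa using norm_inner_le_norm (𝕜 := ℂ) (U x) f
          rw [h1]
          exact h2.trans (mul_le_mul_of_nonneg_left hfbound (norm_nonneg _))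
        rcases eq_or_lt_of_le (norm_nonneg x) with h0 | h0
        · rw [← h0, mul_zero]; exact norm_nonneg _
        · have hsne : s ≠ 0 := hsA.ne'
          have h4 : (s * ‖x‖) * ‖x‖ ≤ ‖U x‖ * ‖x‖ := by
            calc (s * ‖x‖) * ‖x‖ = s * ‖x‖ ^ 2 := by ring
            _ ≤ s * (‖U x‖ * (s⁻¹ * ‖x‖)) := mul_le_mul_of_nonneg_left hxx hsA.le
            _ = ‖U x‖ * ‖x‖ := by field_simp
          exact le_of_mul_le_mul_right h4 h0
      -- now the spectrum inclusion
      by_cases hss : Subsingleton ((LinearMap.ker (U : lp (fun _ : ℕ => ℂ) 2 →ₗ[ℂ] H))ᗮ : Submodule ℂ (lp (fun _ : ℕ => ℂ) 2))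
      · rw [aux_spectrum_empty R]
        exact Set.empty_subset _
      · haveI : Nontrivial ((LinearMap.ker (U : lp (fun _ : ℕ => ℂ) 2 →ₗ[ℂ] H))ᗮ : Submodule ℂ (lp (fun _ : ℕ => ℂ) 2)) :=
          not_subsingleton_iff_nontrivial.mp hss
        intro z hz
        have hq : ∀ x : ((LinearMap.ker (U : lp (fun _ : ℕ => ℂ) 2 →ₗ[ℂ] H))ᗮ : Submodule ℂ (lp (fun _ : ℕ => ℂ) 2)),
            Real.sqrt A ^ 2 * ‖x‖ ^ 2 ≤ (⟪x, R x⟫ : ℂ).re := by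
          intro x
          rw [hRquad x]
          have h1 : Real.sqrt A * ‖(x : lp (fun _ : ℕ => ℂ) 2)‖ ≤ ‖U x‖ := hUlow x x.2
          have h2 : ‖(x : lp (fun _ : ℕ => ℂ) 2)‖ = ‖x‖ := rfl
          rw [h2] at h1
          have h3 : (Real.sqrt A * ‖x‖) ^ 2 ≤ ‖U (x : lp (fun _ : ℕ => ℂ) 2)‖ ^ 2 :=
            pow_le_pow_left₀ (by positivity) h1 2
          calc Real.sqrt A ^ 2 * ‖x‖ ^ 2 = (Real.sqrt A * ‖x‖) ^ 2 := by ring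
          _ ≤ _ := h3
        obtain ⟨hre, h0, hBd⟩ := aux_spectrum_sub R hRsa (by positivity) hq hRnorm hz
        exact ⟨z.re, ⟨lt_of_lt_of_le (by positivity) h0, hBd⟩, hre.symm⟩
    · -- BACKWARD: spectrum condition ⟹ frame sequence
      intro hspec
      have h0notin : (0 : ℂ) ∉ spectrum ℂ R := by
        intro h
        obtain ⟨t, ht, hteq⟩ := hspec h
        rw [Complex.ofReal_eq_zero] at hteq
        rw [hteq] at ht
        exact lt_irrefl 0 ht.1
      have hRunit : IsUnit R := by
        have h1 := spectrum.notMem_iff.mp h0notin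
        rw [map_zero, zero_sub] at h1
        simpa using h1.neg
      -- bounded below on (ker U)ᗮ
      obtain ⟨V, hV⟩ := hRunit
      set Vi : ((LinearMap.ker (U : lp (fun _ : ℕ => ℂ) 2 →ₗ[ℂ] H))ᗮ : Submodule ℂ (lp (fun _ : ℕ => ℂ) 2)) →L[ℂ]
          ((LinearMap.ker (U : lp (fun _ : ℕ => ℂ) 2 →ₗ[ℂ] H))ᗮ : Submodule ℂ (lp (fun _ : ℕ => ℂ) 2)) := ↑V⁻¹ with hVi
      set C : ℝ := ‖Vi‖ * ‖U‖ + 1 with hCdef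
      have hC : 0 < C := by positivity
      have hlow : ∀ x : ((LinearMap.ker (U : lp (fun _ : ℕ => ℂ) 2 →ₗ[ℂ] H))ᗮ : Submodule ℂ (lp (fun _ : ℕ => ℂ) 2)),
          ‖(x : lp (fun _ : ℕ => ℂ) 2)‖ ≤ C * ‖U x‖ := by
        intro x
        have h1 : ‖x‖ ≤ ‖Vi‖ * ‖R x‖ := by
          have h2 : Vi (R x) = x := by
            rw [hVi, ← hV, ← ContinuousLinearMap.mul_apply, V.inv_mul,
              ContinuousLinearMap.one_apply]
          calc ‖x‖ = ‖Vi (R x)‖ := by rw [h2]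
          _ ≤ ‖Vi‖ * ‖R x‖ := Vi.le_opNorm _
        have h3 : ‖R x‖ ≤ ‖U‖ * ‖U x‖ := by
          have h4 : ‖R x‖ = ‖(R x : lp (fun _ : ℕ => ℂ) 2)‖ := rfl
          rw [h4, hR x]
          calc ‖ContinuousLinearMap.adjoint U (U x)‖
              ≤ ‖ContinuousLinearMap.adjoint U‖ * ‖U x‖ :=
            (ContinuousLinearMap.adjoint U).le_opNorm _
          _ = ‖U‖ * ‖U x‖ := by rw [LinearIsometryEquiv.norm_map ContinuousLinearMap.adjoint U]
        have h4 : ‖(x : lp (fun _ : ℕ => ℂ) 2)‖ = ‖x‖ := rfl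
        rw [h4]
        calc ‖x‖ ≤ ‖Vi‖ * (‖U‖ * ‖U x‖) :=
              h1.trans (mul_le_mul_of_nonneg_left h3 (ContinuousLinearMap.opNorm_nonneg Vi))
        _ = (‖Vi‖ * ‖U‖) * ‖U x‖ := by ring
        _ ≤ (‖Vi‖ * ‖U‖ + 1) * ‖U x‖ := by nlinarith [norm_nonneg (U x)]
      -- lower frame bound transfer to closure (range U)
      have hfrlow : ∀ f ∈ closure (Set.range U),
          (C ^ 2)⁻¹ * ‖f‖ ^ 2 ≤ ‖Ua f‖ ^ 2 := by
        set g : ((LinearMap.ker (U : lp (fun _ : ℕ => ℂ) 2 →ₗ[ℂ] H))ᗮ : Submodule ℂ (lp (fun _ : ℕ => ℂ) 2)) →L[ℂ] H :=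
          U.comp (Submodule.subtypeL _) with hg
        have hanti : AntilipschitzWith (⟨C, hC.le⟩ : NNReal) g := by
          refine g.antilipschitz_of_bound fun x => ?_
          exact hlow x
        have hclosed : IsClosed (Set.range g) := hanti.isClosed_range g.uniformContinuous
        have hrg : Set.range g = U '' (((LinearMap.ker (U : lp (fun _ : ℕ => ℂ) 2 →ₗ[ℂ] H))ᗮ :
            Submodule ℂ (lp (fun _ : ℕ => ℂ) 2)) : Set _) := by
          ext y; constructor
          · rintro ⟨m, rfl⟩; exact ⟨(m : lp (fun _ : ℕ => ℂ) 2), m.2, rfl⟩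
          · rintro ⟨v, hv, rfl⟩; exact ⟨⟨v, hv⟩, rfl⟩
        rw [hrg] at hclosed
        have hsub : Set.range U ⊆ U '' (((LinearMap.ker (U : lp (fun _ : ℕ => ℂ) 2 →ₗ[ℂ] H))ᗮ :
            Submodule ℂ (lp (fun _ : ℕ => ℂ) 2)) : Set _) := by
          rintro - ⟨c, rfl⟩
          obtain ⟨y, hy, z, hz, rfl⟩ := (LinearMap.ker (U : lp (fun _ : ℕ => ℂ) 2 →ₗ[ℂ] H)).exists_add_mem_mem_orthogonal c
          refine ⟨z, hz, ?_⟩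
          rw [map_add, show U y = 0 from LinearMap.mem_ker.mp hy, zero_add]
        have hMK : closure (Set.range U) = U '' (((LinearMap.ker (U : lp (fun _ : ℕ => ℂ) 2 →ₗ[ℂ] H))ᗮ :
            Submodule ℂ (lp (fun _ : ℕ => ℂ) 2)) : Set _) := by
          apply subset_antisymm (closure_minimal hsub hclosed)
          exact (Set.image_subset_range _ _).trans subset_closure
        intro f hf
        rw [hMK] at hf
        obtain ⟨x, hx, rfl⟩ := hf
        set xx : ((LinearMap.ker (U : lp (fun _ : ℕ => ℂ) 2 →ₗ[ℂ] H))ᗮ : Submodule ℂ (lp (fun _ : ℕ => ℂ) 2)) := ⟨x, hx⟩ with hxx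
        have hb : ‖U x‖ ^ 2 ≤ C * (‖U x‖ * ‖Ua (U x)‖) := by
          have h1 : (‖U x‖ : ℝ) ^ 2 = (⟪(xx : lp (fun _ : ℕ => ℂ) 2), Ua (U x)⟫ : ℂ).re := by
            rw [hUa, ContinuousLinearMap.adjoint_inner_right]
            simpa [hxx] using (inner_self_eq_norm_sq (𝕜 := ℂ) (U x)).symm
          have h2 : (⟪(xx : lp (fun _ : ℕ => ℂ) 2), Ua (U x)⟫ : ℂ).re ≤ ‖x‖ * ‖Ua (U x)‖ := by
            refine (Complex.re_le_norm _).trans ?_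
            simpa using
              norm_inner_le_norm (𝕜 := ℂ) (xx : lp (fun _ : ℕ => ℂ) 2) (Ua (U x))
          have h3 : ‖x‖ ≤ C * ‖U x‖ := hlow xx
          rw [h1]
          calc (⟪(xx : lp (fun _ : ℕ => ℂ) 2), Ua (U x)⟫ : ℂ).re
              ≤ ‖x‖ * ‖Ua (U x)‖ := h2
          _ ≤ (C * ‖U x‖) * ‖Ua (U x)‖ := mul_le_mul_of_nonneg_right h3 (norm_nonneg _)
          _ = C * (‖U x‖ * ‖Ua (U x)‖) := by ring
        exact aux_ineq hC hb (norm_nonneg _) (norm_nonneg _)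
      -- produce the frame bounds
      refine ⟨(C ^ 2)⁻¹, ‖U‖ ^ 2 + 1, by positivity, by positivity, fun f hf => ?_⟩
      rw [hMeq] at hf
      constructor
      · rw [hsum f]
        exact hfrlow f hf
      · rw [hsum f]
        have h1 : ‖Ua f‖ ≤ ‖U‖ * ‖f‖ := by
          calc ‖Ua f‖ ≤ ‖Ua‖ * ‖f‖ := Ua.le_opNorm f
          _ = ‖U‖ * ‖f‖ := by
            rw [hUa, LinearIsometryEquiv.norm_map ContinuousLinearMap.adjoint U]
        have h2 : ‖Ua f‖ ^ 2 ≤ (‖U‖ * ‖f‖) ^ 2 := pow_le_pow_left₀ (norm_nonneg _) h1 2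
        calc ‖Ua f‖ ^ 2 ≤ (‖U‖ * ‖f‖) ^ 2 := h2
        _ = ‖U‖ ^ 2 * ‖f‖ ^ 2 := by ring
        _ ≤ (‖U‖ ^ 2 + 1) * ‖f‖ ^ 2 := by nlinarith [sq_nonneg ‖f‖]
  · -- second statement: spectrum of U*U
    intro _
    intro z hz
    have hsa : IsSelfAdjoint ((ContinuousLinearMap.adjoint U).comp U) := by
      rw [ContinuousLinearMap.isSelfAdjoint_iff']
      rw [ContinuousLinearMap.adjoint_comp, ContinuousLinearMap.adjoint_adjoint]
    have hq : ∀ c, (0:ℝ) * ‖c‖ ^ 2 ≤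
        (⟪c, ((ContinuousLinearMap.adjoint U).comp U) c⟫ : ℂ).re := by
      intro c
      rw [ContinuousLinearMap.comp_apply, ContinuousLinearMap.adjoint_inner_right]
      have hns := inner_self_eq_norm_sq (𝕜 := ℂ) (U c)
      simp only [zero_mul]
      simp only [RCLike.re_to_complex] at hns ⊢
      rw [hns]
      positivity
    have hnorm : ‖(ContinuousLinearMap.adjoint U).comp U‖ ≤ ‖U‖ ^ 2 := by
      rw [ContinuousLinearMap.norm_adjoint_comp_self, sq]
    obtain ⟨hre, h0, hB⟩ := aux_spectrum_sub _ hsa le_rfl hq hnorm hz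
    exact ⟨z.re, ⟨h0, hB⟩, hre.symm⟩
end

section
/- Let H be a complex Hilbert space, T a bounded invertible linear operator on H, and f₀ ∈ H such that the bi-infinite sequence {T^k f₀}_{k∈ℤ} is a tight frame for H. Then T is unitary, i.e., T*T = TT* = I. -/
open scoped ComplexInnerProductSpace
open ContinuousLinearMap

/-- If `{T^k f₀}_{k∈ℤ}` is a tight frame for a complex Hilbert space `H`, where
`T` is a bounded invertible operator, then `T` is unitary. -/
theorem unitary_of_zorbit_tight_frame
    {H : Type*} [NormedAddCommGroup H] [InnerProductSpace ℂ H] [CompleteSpace H]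
    (T : H ≃L[ℂ] H) (f₀ : H)
    (htight : ∃ A : ℝ, 0 < A ∧ ∀ f : H,
      HasSum (fun k : ℤ => ‖⟪f, (T ^ k) f₀⟫‖ ^ 2) (A * ‖f‖ ^ 2)) :
    (adjoint (T : H →L[ℂ] H)).comp (T : H →L[ℂ] H) = 1 ∧
    (T : H →L[ℂ] H).comp (adjoint (T : H →L[ℂ] H)) = 1 := by
  obtain ⟨A, hA, hsum⟩ := htight
  set S : H →L[ℂ] H := adjoint (T : H →L[ℂ] H) with hS
  -- key: the adjoint is norm-preserving
  have key : ∀ f : H, ‖S f‖ = ‖f‖ := by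
    intro f
    have h1 : HasSum (fun k : ℤ => ‖⟪S f, (T ^ k) f₀⟫‖ ^ 2) (A * ‖S f‖ ^ 2) := hsum (S f)
    have h2 : HasSum (fun k : ℤ => ‖⟪f, (T ^ (k + 1)) f₀⟫‖ ^ 2) (A * ‖f‖ ^ 2) := by
      have := (Equiv.addRight (1 : ℤ)).hasSum_iff.mpr (hsum f)
      simpa [Function.comp_def] using this
    have heq : (fun k : ℤ => ‖⟪S f, (T ^ k) f₀⟫‖ ^ 2)
        = fun k : ℤ => ‖⟪f, (T ^ (k + 1)) f₀⟫‖ ^ 2 := by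
      funext k
      have : (T ^ (k + 1)) f₀ = (T : H →L[ℂ] H) ((T ^ k) f₀) := by
        rw [add_comm, zpow_add, zpow_one]
        rfl
      rw [this, hS, adjoint_inner_left]
    rw [heq] at h1
    have hAA : A * ‖S f‖ ^ 2 = A * ‖f‖ ^ 2 := h1.unique h2
    field_simp at hAA
    rcases (Or.inl ((sq_eq_sq₀ (norm_nonneg _) (norm_nonneg _)).mp hAA) : ‖S f‖ = ‖f‖ ∨ A = 0) with h | h
    · exact h
    · exact absurd h hA.ne'
  have hTT : (T : H →L[ℂ] H).comp S = 1 := by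
    have := (norm_map_iff_adjoint_comp_self S).mp key
    rwa [hS, adjoint_adjoint] at this
  refine ⟨?_, hTT⟩
  -- S is a right inverse of T, and T is bijective, so S is also a left inverse
  ext x
  have h1 : (T : H →L[ℂ] H) (S ((T : H →L[ℂ] H) x)) = (T : H →L[ℂ] H) x :=
    congrFun (congrArg DFunLike.coe hTT) ((T : H →L[ℂ] H) x)
  have := T.injective h1
  simpa using this
end

section
/- Let H be a complex Hilbert space, T a bounded invertible linear operator on H, and f₀ ∈ H such that {T^k f₀}_{k∈ℤ} is a tight frame for H. Suppose U is a bounded linear operator on H and g₀ ∈ H are such that {U^k g₀}_{k∈ℤ} is a dual frame of {T^k f₀}_{k∈ℤ}, i.e., {U^k g₀}_{k∈ℤ} is a frame for H and f = Σ_{k∈ℤ} ⟨f, U^k g₀⟩ T^k f₀ for every f ∈ H. Then U = T. -/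
open scoped ComplexInnerProductSpace

/-!
Both hypotheses on the orbits are invariant under the shift `k ↦ k + 1`, and moving the
shift from the orbit to the vector `f` turns it into an adjoint. Applying `T` to the
reconstruction formula of `f` and shifting back gives the reconstruction formula of
`(U⁻¹)† f`, so `T = (U⁻¹)†`. Shifting the tight frame identity for `T† f` shows that
`T†` is an isometry, hence `T T† = 1`; together, `T U⁻¹ = 1`.
-/

namespace ContinuousLinearEquiv

variable {R M : Type*} [Semiring R] [AddCommMonoid M] [TopologicalSpace M] [Module R M]

theorem zpow_add_one_apply (T : M ≃L[R] M) (k : ℤ) (x : M) :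
    (T ^ (k + 1)) x = T ((T ^ k) x) := by
  rw [add_comm, zpow_one_add]
  rfl

theorem zpow_sub_one_apply (T : M ≃L[R] M) (k : ℤ) (x : M) :
    (T ^ (k - 1)) x = T.symm ((T ^ k) x) := by
  rw [sub_eq_neg_add, zpow_add, zpow_neg_one]
  rfl

end ContinuousLinearEquiv

section Adjoint

open ContinuousLinearMap

variable {𝕜 E : Type*} [RCLike 𝕜] [NormedAddCommGroup E] [InnerProductSpace 𝕜 E]
  [CompleteSpace E]

theorem coe_eq_adjoint_symm_of_hasSum_zorbit (T U : E ≃L[𝕜] E) (f₀ g₀ : E)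
    (hdual : ∀ f : E, HasSum (fun k : ℤ => inner 𝕜 f ((U ^ k) g₀) • (T ^ k) f₀) f) :
    (T : E →L[𝕜] E) = adjoint (U.symm : E →L[𝕜] E) := by
  ext f
  have hTf : HasSum (fun k : ℤ => inner 𝕜 f ((U ^ (k - 1)) g₀) • (T ^ k) f₀) (T f) := by
    refine ((Equiv.subRight (1 : ℤ)).hasSum_iff.mpr ((hdual f).mapL (T : E →L[𝕜] E))).congr_fun
      fun k => ?_
    simp [← T.zpow_add_one_apply]
  refine hTf.unique ((hdual _).congr_fun fun k => ?_)
  rw [adjoint_inner_left, U.zpow_sub_one_apply]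
  rfl

theorem norm_adjoint_apply_of_hasSum_zorbit (T : E ≃L[𝕜] E) (f₀ : E) {A : ℝ} (hA : A ≠ 0)
    (htight : ∀ f : E, HasSum (fun k : ℤ => ‖inner 𝕜 f ((T ^ k) f₀)‖ ^ 2) (A * ‖f‖ ^ 2))
    (f : E) : ‖adjoint (T : E →L[𝕜] E) f‖ = ‖f‖ := by
  have hshift : HasSum (fun k : ℤ => ‖inner 𝕜 f ((T ^ (k + 1)) f₀)‖ ^ 2) (A * ‖f‖ ^ 2) :=
    ((Equiv.addRight (1 : ℤ)).hasSum_iff.mpr (htight f)).congr_fun fun k => rfl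
  have hadj : HasSum (fun k : ℤ => ‖inner 𝕜 f ((T ^ (k + 1)) f₀)‖ ^ 2)
      (A * ‖adjoint (T : E →L[𝕜] E) f‖ ^ 2) :=
    (htight _).congr_fun fun k => by
      rw [adjoint_inner_left, T.zpow_add_one_apply]; rfl
  have hsq := mul_left_cancel₀ hA (hadj.unique hshift)
  exact (pow_left_inj₀ (norm_nonneg _) (norm_nonneg _) two_ne_zero).mp hsq

theorem comp_adjoint_eq_one_of_hasSum_zorbit (T : E ≃L[𝕜] E) (f₀ : E) {A : ℝ} (hA : A ≠ 0)
    (htight : ∀ f : E, HasSum (fun k : ℤ => ‖inner 𝕜 f ((T ^ k) f₀)‖ ^ 2) (A * ‖f‖ ^ 2)) :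
    (T : E →L[𝕜] E) ∘L adjoint (T : E →L[𝕜] E) = 1 := by
  simpa using (norm_map_iff_adjoint_comp_self _).mp
    (norm_adjoint_apply_of_hasSum_zorbit T f₀ hA htight)

end Adjoint

open ContinuousLinearMap in
theorem dual_frame_operator_eq_of_zorbit_tight_frame_general
    {H : Type*} [NormedAddCommGroup H] [InnerProductSpace ℂ H] [CompleteSpace H]
    (T U : H ≃L[ℂ] H) (f₀ g₀ : H)
    (htight : ∃ A : ℝ, 0 < A ∧ ∀ f : H,
      HasSum (fun k : ℤ => ‖⟪f, (T ^ k) f₀⟫‖ ^ 2) (A * ‖f‖ ^ 2))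
    (hdual : ∀ f : H,
      HasSum (fun k : ℤ => (⟪f, (U ^ k) g₀⟫ : ℂ) • (T ^ k) f₀) f) :
    U = T := by
  obtain ⟨A, hA, htight⟩ := htight
  have hadj : adjoint (T : H →L[ℂ] H) = U.symm := by
    rw [coe_eq_adjoint_symm_of_hasSum_zorbit T U f₀ g₀ hdual, adjoint_adjoint]
  have hTU : (T : H →L[ℂ] H) ∘L (U.symm : H →L[ℂ] H) = 1 := by
    rw [← hadj]
    exact comp_adjoint_eq_one_of_hasSum_zorbit T f₀ hA.ne' htight
  ext x
  simpa using (congrArg (fun S : H →L[ℂ] H => S (U x)) hTU).symm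

/-- If `{T^k f₀}_{k∈ℤ}` is a tight frame for `H` (with `T` bounded and
invertible) and `{U^k g₀}_{k∈ℤ}` is a dual frame of it (with `U` bounded and
invertible), then `U = T`. -/
theorem dual_frame_operator_eq_of_zorbit_tight_frame
    {H : Type*} [NormedAddCommGroup H] [InnerProductSpace ℂ H] [CompleteSpace H]
    (T U : H ≃L[ℂ] H) (f₀ g₀ : H)
    (htight : ∃ A : ℝ, 0 < A ∧ ∀ f : H,
      HasSum (fun k : ℤ => ‖⟪f, (T ^ k) f₀⟫‖ ^ 2) (A * ‖f‖ ^ 2))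
    (hUframe : ∃ A B : ℝ, 0 < A ∧ 0 < B ∧ ∀ f : H,
      A * ‖f‖ ^ 2 ≤ ∑' k : ℤ, ‖⟪f, (U ^ k) g₀⟫‖ ^ 2 ∧
      ∑' k : ℤ, ‖⟪f, (U ^ k) g₀⟫‖ ^ 2 ≤ B * ‖f‖ ^ 2)
    (hdual : ∀ f : H,
      HasSum (fun k : ℤ => (⟪f, (U ^ k) g₀⟫ : ℂ) • (T ^ k) f₀) f) :
    U = T :=
  dual_frame_operator_eq_of_zorbit_tight_frame_general T U f₀ g₀ htight hdual
end
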